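/- arXiv:math/0403308 — 7 statements merged into one kernel-verified Lean document; each statement's English description precedes it below -/
import Mathlib

section
/- Let f satisfy 0 < λ ≤ ∂_w f and the growth condition |f(x,u,v,0)| ≤ C(1+|v|^γ) with 0 < γ < 2, on a region where |u| is bounded. If a C² function u : ℝ/ℤ → ℝ satisfies f(x,u,u',u'') = 0 and ‖u‖_∞ ≤ M, then ∫₀¹ (u')² dx ≤ C' for a constant C' depending only on λ, C, γ, M. -/
open MeasureTheory intervalIntegral

/-- Young-type inequality: for `0 < gam < 2` and `A ≥ 0`, we have
`A * t ^ gam ≤ (1/2) * t ^ 2 + A * T ^ gam` with `T = max 1 ((2A+1)^((2-gam)⁻¹))`. -/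
lemma young_aux {A gam : ℝ} (hA : 0 ≤ A) (hgam0 : 0 < gam) (hgam2 : gam < 2) :
    ∀ t : ℝ, 0 ≤ t →
      A * t ^ gam ≤ (1/2) * t ^ (2:ℕ) + A * (max 1 ((2*A+1) ^ ((2-gam)⁻¹))) ^ gam := by
  set T : ℝ := max 1 ((2*A+1) ^ ((2-gam)⁻¹)) with hT
  have hT1 : (1:ℝ) ≤ T := le_max_left _ _
  intro t ht
  rcases le_total t T with h | h
  · have h1 : t ^ gam ≤ T ^ gam := Real.rpow_le_rpow ht h hgam0.le
    have h2 : A * t ^ gam ≤ A * T ^ gam := mul_le_mul_of_nonneg_left h1 hA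
    nlinarith [sq_nonneg t]
  · have ht1 : (1:ℝ) ≤ t := hT1.trans h
    have ht0 : (0:ℝ) < t := lt_of_lt_of_le one_pos ht1
    have hexp : (0:ℝ) < 2 - gam := by linarith
    have h2A : 2 * A ≤ t ^ (2 - gam) := by
      have hB : ((2*A+1) ^ ((2-gam)⁻¹)) ≤ t := le_trans (le_max_right _ _) h
      have hBnn : (0:ℝ) ≤ (2*A+1) ^ ((2-gam)⁻¹) := Real.rpow_nonneg (by linarith) _
      have h3 : ((2*A+1) ^ ((2-gam)⁻¹)) ^ (2 - gam) ≤ t ^ (2 - gam) :=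
        Real.rpow_le_rpow hBnn hB hexp.le
      have h4 : ((2*A+1) ^ ((2-gam)⁻¹)) ^ (2 - gam) = 2*A+1 := by
        rw [← Real.rpow_mul (by linarith), inv_mul_cancel₀ hexp.ne', Real.rpow_one]
      rw [h4] at h3; linarith
    have hkey : t ^ (2 - gam) * t ^ gam = t ^ (2:ℕ) := by
      rw [← Real.rpow_add ht0]
      norm_num
    have hp : (0:ℝ) ≤ t ^ gam := Real.rpow_nonneg ht _
    have h5 : (2 * A) * t ^ gam ≤ t ^ (2 - gam) * t ^ gam :=
      mul_le_mul_of_nonneg_right h2A hp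
    rw [hkey] at h5
    have h6 : (0:ℝ) ≤ A * T ^ gam :=
      mul_nonneg hA (Real.rpow_nonneg (by linarith) _)
    linarith

/-- A priori `L²` bound on `u'` for stationary solutions of a uniformly parabolic
equation with sub-quadratic growth. -/
theorem stmt_3 (lam C gam M : ℝ) (hlam : 0 < lam) (hlam1 : lam ≤ 1)
    (hC : 0 < C) (hgam0 : 0 < gam) (hgam2 : gam < 2) (hM : 0 ≤ M) :
    ∃ C' : ℝ, ∀ (f f' : ℝ → ℝ → ℝ → ℝ → ℝ) (u : ℝ → ℝ),
      (∀ x v w z, HasDerivAt (fun s => f x v w s) (f' x v w z) z) →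
      (∀ x v w z, lam ≤ f' x v w z) →
      (∀ x v w z, f' x v w z ≤ lam⁻¹) →
      (∀ x v w, |v| ≤ M → |f x v w 0| ≤ C * (1 + |w| ^ gam)) →
      ContDiff ℝ 2 u →
      Function.Periodic u 1 →
      (∀ x, |u x| ≤ M) →
      (∀ x, f x (u x) (deriv u x) (deriv (deriv u) x) = 0) →
      ∫ x in (0:ℝ)..1, (deriv u x) ^ 2 ≤ C' := by
  set A : ℝ := M * lam⁻¹ * C with hA
  have hA0 : 0 ≤ A := by positivity
  set T : ℝ := max 1 ((2*A+1) ^ ((2-gam)⁻¹)) with hT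
  have hTgam : (0:ℝ) ≤ T ^ gam := Real.rpow_nonneg (le_trans zero_le_one (le_max_left _ _)) _
  refine ⟨2 * (A * (1 + T ^ gam)), ?_⟩
  intro f f' u hder hlow _hup hgrow hcd hper hbnd heq
  -- regularity facts
  have hdiff : Differentiable ℝ u := hcd.differentiable (by norm_num)
  have hcd' : ContDiff ℝ (1+1) u := by norm_num at hcd ⊢; exact hcd
  have hcd1 : ContDiff ℝ 1 (deriv u) := (contDiff_succ_iff_deriv.mp hcd').2.2
  have hdiff1 : Differentiable ℝ (deriv u) := hcd1.differentiable (by norm_num)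
  have hc1 : Continuous (deriv u) := hcd1.continuous
  have hc2 : Continuous (deriv (deriv u)) := hcd1.continuous_deriv le_rfl
  -- pointwise bound on second derivative
  have hbound : ∀ x, |deriv (deriv u) x| ≤ lam⁻¹ * (C * (1 + |deriv u x| ^ gam)) := by
    intro x
    set z := deriv (deriv u) x with hz
    set g : ℝ → ℝ := fun s => f x (u x) (deriv u x) s with hg
    have hg0 : |g 0| ≤ C * (1 + |deriv u x| ^ gam) := hgrow _ _ _ (hbnd x)
    have hgz : g z = 0 := heq x
    have hds : ∀ s, HasDerivAt (fun r => g r - lam * r)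
        (f' x (u x) (deriv u x) s - lam) s := by
      intro s
      have h := (hder x (u x) (deriv u x) s).sub ((hasDerivAt_id s).const_mul lam)
      rw [mul_one] at h; exact h
    have hmono : Monotone (fun s => g s - lam * s) := by
      apply monotone_of_deriv_nonneg
      · intro s; exact (hds s).differentiableAt
      · intro s
        rw [(hds s).deriv]
        have := hlow x (u x) (deriv u x) s
        linarith
    have key : lam * |z| ≤ |g 0| := by
      rcases le_total 0 z with hzz | hzz
      · have h1 : g 0 - lam * 0 ≤ g z - lam * z := hmono hzz
        rw [hgz] at h1
        rw [abs_of_nonneg hzz]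
        have : lam * z ≤ -g 0 := by linarith
        exact this.trans (neg_le_abs _)
      · have h1 : g z - lam * z ≤ g 0 - lam * 0 := hmono hzz
        rw [hgz] at h1
        rw [abs_of_nonpos hzz]
        have : lam * (-z) ≤ g 0 := by linarith
        exact this.trans (le_abs_self _)
    have h2 := mul_le_mul_of_nonneg_left (key.trans hg0) (inv_nonneg.mpr hlam.le)
    calc |z| = lam⁻¹ * (lam * |z|) := by field_simp
      _ ≤ lam⁻¹ * (C * (1 + |deriv u x| ^ gam)) := by
          exact mul_le_mul_of_nonneg_left (key.trans hg0) (inv_nonneg.mpr hlam.le)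
  -- integration by parts
  have hu' : ∀ y ∈ Set.uIcc (0:ℝ) 1, HasDerivAt u (deriv u y) y :=
    fun y _ => (hdiff y).hasDerivAt
  have hv' : ∀ y ∈ Set.uIcc (0:ℝ) 1, HasDerivAt (deriv u) (deriv (deriv u) y) y :=
    fun y _ => (hdiff1 y).hasDerivAt
  have hint1 : IntervalIntegrable (deriv u) volume 0 1 := hc1.intervalIntegrable 0 1
  have hint2 : IntervalIntegrable (deriv (deriv u)) volume 0 1 := hc2.intervalIntegrable 0 1
  have ibp := intervalIntegral.integral_mul_deriv_eq_deriv_mul hu' hv' hint1 hint2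
  have hu10 : u 1 = u 0 := by simpa using hper 0
  have hdu10 : deriv u 1 = deriv u 0 := by
    have hcomp : (fun x => u (x + 1)) = u := funext hper
    have := deriv_comp_add_const u 1 (x := (0:ℝ))
    rw [hcomp] at this
    simpa using this.symm
  have hLeq : ∫ x in (0:ℝ)..1, (deriv u x) ^ 2
      = - ∫ x in (0:ℝ)..1, u x * deriv (deriv u) x := by
    have : ∫ x in (0:ℝ)..1, deriv u x * deriv u x = ∫ x in (0:ℝ)..1, (deriv u x) ^ 2 := by
      apply intervalIntegral.integral_congr
      intro y _; simp [pow_two]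
    rw [← this]
    rw [hu10, hdu10] at ibp
    linarith
  -- pointwise bound of the integrand
  have hpt : ∀ y, -(u y * deriv (deriv u) y)
      ≤ A * (1 + T ^ gam) + (1/2) * (deriv u y) ^ 2 := by
    intro y
    have h1 : -(u y * deriv (deriv u) y) ≤ |u y| * |deriv (deriv u) y| := by
      calc -(u y * deriv (deriv u) y) ≤ |u y * deriv (deriv u) y| := neg_le_abs _
        _ = |u y| * |deriv (deriv u) y| := abs_mul _ _
    have h2 : |u y| * |deriv (deriv u) y|
        ≤ M * (lam⁻¹ * (C * (1 + |deriv u y| ^ gam))) :=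
      mul_le_mul (hbnd y) (hbound y) (abs_nonneg _) hM
    have h2' : M * (lam⁻¹ * (C * (1 + |deriv u y| ^ gam)))
        = A + A * |deriv u y| ^ gam := by rw [hA]; ring
    have h3 := young_aux hA0 hgam0 hgam2 |deriv u y| (abs_nonneg _)
    rw [← hT] at h3
    have h4 : |deriv u y| ^ (2:ℕ) = (deriv u y) ^ 2 := sq_abs _
    rw [h4] at h3
    rw [h2'] at h2
    nlinarith
  -- integrate the bound
  have hcl : Continuous fun y => -(u y * deriv (deriv u) y) :=
    (hcd.continuous.mul hc2).neg
  have hcr : Continuous fun y => A * (1 + T ^ gam) + (1/2) * (deriv u y) ^ 2 :=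
    continuous_const.add (continuous_const.mul (hc1.pow 2))
  have hintmono : ∫ x in (0:ℝ)..1, -(u x * deriv (deriv u) x)
      ≤ ∫ x in (0:ℝ)..1, (A * (1 + T ^ gam) + (1/2) * (deriv u x) ^ 2) :=
    intervalIntegral.integral_mono_on zero_le_one (hcl.intervalIntegrable 0 1)
      (hcr.intervalIntegrable 0 1) (fun y _ => hpt y)
  have hRHS : ∫ x in (0:ℝ)..1, (A * (1 + T ^ gam) + (1/2) * (deriv u x) ^ 2)
      = A * (1 + T ^ gam) + (1/2) * ∫ x in (0:ℝ)..1, (deriv u x) ^ 2 := by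
    rw [intervalIntegral.integral_add intervalIntegrable_const
      ((show Continuous fun y => (1/2:ℝ) * (deriv u y) ^ 2 from continuous_const.mul (hc1.pow 2)).intervalIntegrable 0 1),
      intervalIntegral.integral_const,
      intervalIntegral.integral_const_mul]
    simp
  rw [intervalIntegral.integral_neg] at hintmono
  rw [hRHS] at hintmono
  rw [hLeq]
  linarith [hintmono, hLeq]
end

section
/- Under the same hypotheses as the previous estimate (uniform parabolicity, sub-quadratic growth, ‖u‖_∞ ≤ M), every 1-periodic C² stationary solution u of f(x,u,u',u'') = 0 satisfies pointwise bounds |u'(x)| ≤ C and |u''(x)| ≤ C with C = C(λ, γ, M) independent of the particular solution. -/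
open Set

/-- MVT lower bound: if `g` has derivative ≥ lam everywhere and `g z0 = 0`,
then `lam * |z0| ≤ |g 0|`. -/
private lemma mvt_lower {g g' : ℝ → ℝ} {lam : ℝ}
    (hg : ∀ z, HasDerivAt g (g' z) z) (hg' : ∀ z, lam ≤ g' z) {z0 : ℝ}
    (hz : g z0 = 0) : lam * |z0| ≤ |g 0| := by
  have hmono : Monotone (fun s => g s - lam * s) := by
    have hd : ∀ s, HasDerivAt (fun s => g s - lam * s) (g' s - lam) s := by
      intro s
      refine ((hg s).sub ((hasDerivAt_id' s).const_mul lam)).congr_deriv ?_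
      ring
    apply monotone_of_deriv_nonneg (fun s => (hd s).differentiableAt)
    intro s
    rw [(hd s).deriv]
    linarith [hg' s]
  rcases le_or_gt 0 z0 with h | h
  · have h2 := hmono h
    simp only [hz, mul_zero, sub_zero, zero_sub] at h2
    rw [abs_of_nonneg h]
    have : lam * z0 ≤ -(g 0) := by linarith
    exact this.trans (neg_le_abs _)
  · have h2 := hmono h.le
    simp only [hz, mul_zero, sub_zero, zero_sub] at h2
    rw [abs_of_neg h]
    have : lam * (-z0) ≤ g 0 := by linarith
    exact this.trans (le_abs_self _)

private lemma hasDerivAt_Ffun (gam : ℝ) (hgam2 : gam < 2) (s : ℝ) :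
    HasDerivAt (fun s : ℝ => (1 + s ^ 2) ^ ((2 - gam) / 2) / (2 - gam))
      (s * (1 + s ^ 2) ^ ((2 - gam) / 2 - 1)) s := by
  have h1 : HasDerivAt (fun s : ℝ => 1 + s ^ 2) (2 * s) s := by
    simpa using ((hasDerivAt_pow 2 s).const_add 1)
  have hpos : (0:ℝ) < 1 + s ^ 2 := by positivity
  have h2 := (h1.rpow_const (p := (2 - gam) / 2) (Or.inl hpos.ne')).div_const (2 - gam)
  refine h2.congr_deriv ?_
  have hg : (2:ℝ) - gam ≠ 0 := by linarith
  generalize (1 + s ^ 2) ^ ((2 - gam) / 2 - 1) = X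
  rw [div_eq_iff hg]
  ring

private lemma Fprime_bound {gam K s z : ℝ} (hgam0 : 0 < gam) (hgam2 : gam < 2) (hK : 0 ≤ K)
    (hz : |z| ≤ K * (1 + |s| ^ gam)) :
    |s * (1 + s ^ 2) ^ ((2 - gam) / 2 - 1) * z| ≤ 2 * K * |s| := by
  have h1 : (0:ℝ) < 1 + s ^ 2 := by positivity
  have hA0 : (0:ℝ) < (1 + s ^ 2) ^ (gam / 2) := Real.rpow_pos_of_pos h1 _
  have hA1 : (1:ℝ) ≤ (1 + s ^ 2) ^ (gam / 2) :=
    Real.one_le_rpow (by nlinarith) (by positivity)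
  have hsg : |s| ^ gam ≤ (1 + s ^ 2) ^ (gam / 2) := by
    have e1 : |s| ^ gam = (s ^ 2) ^ (gam / 2) := by
      rw [← sq_abs, ← Real.rpow_natCast_mul (abs_nonneg s)]
      congr 1
      push_cast
      ring
    rw [e1]
    exact Real.rpow_le_rpow (sq_nonneg s) (by linarith) (by positivity)
  have hneg : (1 + s ^ 2) ^ ((2 - gam) / 2 - 1) = ((1 + s ^ 2) ^ (gam / 2))⁻¹ := by
    rw [← Real.rpow_neg h1.le]
    congr 1
    ring
  have hzn : 0 ≤ |z| := abs_nonneg z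
  have h2 : (1 + |s| ^ gam) * ((1 + s ^ 2) ^ (gam / 2))⁻¹ ≤ 2 := by
    rw [← div_eq_mul_inv, div_le_iff₀ hA0]
    linarith
  have e2 : |s * (1 + s ^ 2) ^ ((2 - gam) / 2 - 1) * z|
      = |s| * ((1 + s ^ 2) ^ (gam / 2))⁻¹ * |z| := by
    rw [abs_mul, abs_mul, hneg, abs_of_nonneg (le_of_lt (inv_pos.2 hA0))]
  rw [e2]
  calc |s| * ((1 + s ^ 2) ^ (gam / 2))⁻¹ * |z|
      ≤ |s| * ((1 + s ^ 2) ^ (gam / 2))⁻¹ * (K * (1 + |s| ^ gam)) := by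
        apply mul_le_mul_of_nonneg_left hz (by positivity)
    _ = (K * |s|) * ((1 + |s| ^ gam) * ((1 + s ^ 2) ^ (gam / 2))⁻¹) := by ring
    _ ≤ (K * |s|) * 2 := mul_le_mul_of_nonneg_left h2 (by positivity)
    _ = 2 * K * |s| := by ring

private lemma grad_bound {gam K M : ℝ} (hgam0 : 0 < gam) (hgam2 : gam < 2)
    (hK : 0 < K) (hM : 0 ≤ M) {u : ℝ → ℝ}
    (hud : Differentiable ℝ u) (hvd : Differentiable ℝ (deriv u))
    (hper : Function.Periodic u 1) (hbnd : ∀ x, |u x| ≤ M)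
    (key : ∀ y, |deriv (deriv u) y| ≤ K * (1 + |deriv u y| ^ gam)) :
    ∀ x, |deriv u x| ≤
      Real.sqrt ((1 + 4 * K * M * (2 - gam)) ^ (((2 - gam) / 2)⁻¹)) := by
  have hp0 : (0:ℝ) < (2 - gam) / 2 := by linarith
  have hB1 : (1:ℝ) ≤ 1 + 4 * K * M * (2 - gam) := by
    have : (0:ℝ) ≤ 4 * K * M * (2 - gam) :=
      mul_nonneg (mul_nonneg (by linarith) hM) (by linarith)
    linarith
  intro x
  by_cases hvx0 : deriv u x = 0
  · rw [hvx0, abs_zero]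
    exact Real.sqrt_nonneg _
  -- periodicity of the derivative
  have hvper : Function.Periodic (deriv u) 1 := by
    intro y
    have h1 : (fun t => u (t + 1)) = u := funext fun t => hper t
    calc deriv u (y + 1) = deriv (fun t => u (t + 1)) y := (deriv_comp_add_const u 1 y).symm
      _ = deriv u y := by rw [h1]
  -- a zero of the derivative in [x-1, x]
  have hu01 : u 0 = u 1 := by simpa using (hper 0).symm
  obtain ⟨c, -, hvc⟩ := exists_deriv_eq_zero (by norm_num : (0:ℝ) < 1)
    hud.continuous.continuousOn hu01
  set k : ℤ := ⌊x - c⌋ with hk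
  have hzk : deriv u (c + k) = 0 := by
    have h2 := (hvper.int_mul k) c
    simp only [mul_one] at h2
    rw [h2, hvc]
  have hk1 : x - 1 ≤ c + (k:ℝ) := by
    have := Int.sub_one_lt_floor (x - c)
    rw [← hk] at this
    linarith
  have hk2 : c + (k:ℝ) ≤ x := by
    have := Int.floor_le (x - c)
    rw [← hk] at this
    linarith
  -- the largest zero a ≤ x
  set S : Set ℝ := Icc (x - 1) x ∩ {y | deriv u y = 0} with hS
  have hcomp : IsCompact S :=
    isCompact_Icc.inter_right (isClosed_eq hvd.continuous continuous_const)
  have hne : S.Nonempty := ⟨c + (k:ℝ), ⟨hk1, hk2⟩, hzk⟩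
  set a := sSup S with ha
  have haS : a ∈ S := hcomp.sSup_mem hne
  have hva : deriv u a = 0 := haS.2
  have hax : a ≤ x := haS.1.2
  have hub : ∀ y, y ∈ S → y ≤ a := fun y hy => le_csSup hcomp.bddAbove hy
  have hax' : a < x := lt_of_le_of_ne hax (fun h => hvx0 (h ▸ hva))
  have hnz : ∀ y ∈ Ioc a x, deriv u y ≠ 0 := by
    intro y hy h0
    exact absurd (hub y ⟨⟨le_trans haS.1.1 hy.1.le, hy.2⟩, h0⟩) (not_le.2 hy.1)
  -- sign
  set σ : ℝ := if 0 < deriv u x then 1 else -1 with hσ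
  have hσ1 : σ = 1 ∨ σ = -1 := by
    by_cases hq : 0 < deriv u x
    · left; rw [hσ, if_pos hq]
    · right; rw [hσ, if_neg hq]
  have hσabs : |σ| = 1 := by rcases hσ1 with h | h <;> rw [h] <;> norm_num
  have hsgn : ∀ y ∈ Ioc a x, 0 < σ * deriv u y := by
    intro y hy
    by_cases hq : 0 < deriv u x
    · rw [hσ, if_pos hq, one_mul]
      rcases (hnz y hy).lt_or_gt with h | h
      · exfalso
        obtain ⟨z, hz, hz0⟩ := intermediate_value_Icc hy.2 hvd.continuous.continuousOn
          (⟨h.le, hq.le⟩ : (0:ℝ) ∈ Icc (deriv u y) (deriv u x))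
        exact hnz z ⟨lt_of_lt_of_le hy.1 hz.1, hz.2⟩ hz0
      · exact h
    · have hxneg : deriv u x < 0 := (Ne.lt_or_gt hvx0).resolve_right hq
      rw [hσ, if_neg hq]
      rcases (hnz y hy).lt_or_gt with h | h
      · nlinarith
      · exfalso
        obtain ⟨z, hz, hz0⟩ := intermediate_value_Icc' hy.2 hvd.continuous.continuousOn
          (⟨hxneg.le, h.le⟩ : (0:ℝ) ∈ Icc (deriv u x) (deriv u y))
        exact hnz z ⟨lt_of_lt_of_le hy.1 hz.1, hz.2⟩ hz0
  -- Lyapunov function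
  set h : ℝ → ℝ :=
    fun y => (1 + (deriv u y) ^ 2) ^ ((2 - gam) / 2) / (2 - gam) - (2 * K * σ) * u y with hh
  have hder : ∀ y, HasDerivAt h
      (deriv u y * (1 + (deriv u y) ^ 2) ^ ((2 - gam) / 2 - 1) * deriv (deriv u) y
        - (2 * K * σ) * deriv u y) y := by
    intro y
    have h1 := (hasDerivAt_Ffun gam hgam2 (deriv u y)).comp y (hvd y).hasDerivAt
    have h2 := ((hud y).hasDerivAt.const_mul (2 * K * σ))
    exact h1.sub h2
  have hdiff : Differentiable ℝ h := fun y => (hder y).differentiableAt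
  have hmono : AntitoneOn h (Icc a x) := by
    apply antitoneOn_of_deriv_nonpos (convex_Icc a x) hdiff.continuous.continuousOn
      hdiff.differentiableOn
    intro y hy
    rw [interior_Icc] at hy
    rw [(hder y).deriv]
    have hs := hsgn y ⟨hy.1, hy.2.le⟩
    have habs : σ * deriv u y = |deriv u y| := by
      calc σ * deriv u y = |σ * deriv u y| := (abs_of_pos hs).symm
        _ = |σ| * |deriv u y| := abs_mul _ _
        _ = |deriv u y| := by rw [hσabs, one_mul]
    have hb := Fprime_bound hgam0 hgam2 hK.le (key y)
    have h3 : deriv u y * (1 + (deriv u y) ^ 2) ^ ((2 - gam) / 2 - 1) * deriv (deriv u) y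
        ≤ 2 * K * |deriv u y| := le_trans (le_abs_self _) hb
    have h4 : (2 * K * σ) * deriv u y = 2 * K * |deriv u y| := by
      rw [← habs]; ring
    linarith
  -- evaluate at the endpoints
  have hend := hmono (left_mem_Icc.2 hax'.le) (right_mem_Icc.2 hax'.le) hax'.le
  rw [hh] at hend
  simp only [hva] at hend
  have hF0 : ((1:ℝ) + 0 ^ 2) ^ ((2 - gam) / 2) / (2 - gam) = 1 / (2 - gam) := by
    norm_num
  rw [hF0] at hend
  -- hend : F(v x) - 2Kσ u x ≤ 1/(2-gam) - 2Kσ u a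
  have hosc : (2 * K * σ) * u x - (2 * K * σ) * u a ≤ 4 * K * M := by
    have h5 : |(2 * K * σ) * u x - (2 * K * σ) * u a| ≤ 4 * K * M := by
      have : (2 * K * σ) * u x - (2 * K * σ) * u a = (2 * K * σ) * (u x - u a) := by ring
      rw [this, abs_mul, abs_mul, abs_mul, hσabs]
      have h6 : |u x - u a| ≤ 2 * M := by
        have := hbnd x; have := hbnd a
        have := abs_sub (u x) (u a)
        calc |u x - u a| ≤ |u x| + |u a| := abs_sub _ _
          _ ≤ 2 * M := by linarith [hbnd x, hbnd a]
      have h7 : |2| * |K| * 1 = 2 * K := by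
        rw [abs_of_nonneg (by norm_num : (0:ℝ) ≤ 2), abs_of_nonneg hK.le]; ring
      rw [h7]
      nlinarith
    linarith [le_of_abs_le h5]
  have hBle : (1 + (deriv u x) ^ 2) ^ ((2 - gam) / 2) ≤ 1 + 4 * K * M * (2 - gam) := by
    have hq : (0:ℝ) < 2 - gam := by linarith
    have h8 : (1 + (deriv u x) ^ 2) ^ ((2 - gam) / 2) / (2 - gam) ≤ 1 / (2 - gam) + 4 * K * M := by
      linarith
    rw [div_le_iff₀ hq] at h8
    have h10 : (1 / (2 - gam) + 4 * K * M) * (2 - gam) = 1 + 4 * K * M * (2 - gam) := by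
      field_simp
    rw [h10] at h8
    exact h8
  -- invert the power
  have e := Real.rpow_rpow_inv (x := 1 + (deriv u x) ^ 2) (by positivity) (ne_of_gt hp0)
  have hmain := Real.rpow_le_rpow (Real.rpow_nonneg (by positivity) _) hBle
    (inv_nonneg.2 hp0.le)
  rw [e] at hmain
  calc |deriv u x| = Real.sqrt ((deriv u x) ^ 2) := (Real.sqrt_sq_eq_abs _).symm
    _ ≤ Real.sqrt ((1 + 4 * K * M * (2 - gam)) ^ (((2 - gam) / 2)⁻¹)) :=
        Real.sqrt_le_sqrt (by nlinarith)
/-- Pointwise a priori bounds on `u'` and `u''` for stationary solutions. -/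
theorem stmt_4 (lam C gam M : ℝ) (hlam : 0 < lam) (hlam1 : lam ≤ 1)
    (hC : 0 < C) (hgam0 : 0 < gam) (hgam2 : gam < 2) (hM : 0 ≤ M) :
    ∃ C' : ℝ, ∀ (f f' : ℝ → ℝ → ℝ → ℝ → ℝ) (u : ℝ → ℝ),
      (∀ x v w z, HasDerivAt (fun s => f x v w s) (f' x v w z) z) →
      (∀ x v w z, lam ≤ f' x v w z) →
      (∀ x v w z, f' x v w z ≤ lam⁻¹) →
      (∀ x v w, |v| ≤ M → |f x v w 0| ≤ C * (1 + |w| ^ gam)) →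
      ContDiff ℝ 2 u →
      Function.Periodic u 1 →
      (∀ x, |u x| ≤ M) →
      (∀ x, f x (u x) (deriv u x) (deriv (deriv u) x) = 0) →
      ∀ x : ℝ, |deriv u x| ≤ C' ∧ |deriv (deriv u) x| ≤ C' := by
  set K := C / lam with hKdef
  have hK0 : 0 < K := div_pos hC hlam
  set C1 := Real.sqrt ((1 + 4 * K * M * (2 - gam)) ^ (((2 - gam) / 2)⁻¹)) with hC1
  have hC10 : 0 ≤ C1 := Real.sqrt_nonneg _
  refine ⟨max C1 (K * (1 + C1 ^ gam)), ?_⟩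
  intro f f' u hf hfl hfu hgrow hu hper hbnd heq
  -- smoothness
  rw [show (2 : WithTop ℕ∞) = 1 + 1 from rfl, contDiff_succ_iff_deriv] at hu
  obtain ⟨hud, -, hu1⟩ := hu
  obtain ⟨hvd, -⟩ := contDiff_one_iff_deriv.1 hu1
  -- pointwise second-derivative bound
  have key : ∀ y, |deriv (deriv u) y| ≤ K * (1 + |deriv u y| ^ gam) := by
    intro y
    have h0 := mvt_lower (hf y (u y) (deriv u y)) (hfl y (u y) (deriv u y)) (heq y)
    have h1 := hgrow y (u y) (deriv u y) (hbnd y)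
    have h2 := h0.trans h1
    rw [hKdef, div_mul_eq_mul_div, le_div_iff₀ hlam, mul_comm]
    exact h2
  have hgb := grad_bound hgam0 hgam2 hK0 hM hud hvd hper hbnd key
  intro x
  have hvx : |deriv u x| ≤ C1 := hgb x
  constructor
  · exact hvx.trans (le_max_left _ _)
  · refine le_trans (key x) (le_trans ?_ (le_max_right _ _))
    have h3 : |deriv u x| ^ gam ≤ C1 ^ gam :=
      Real.rpow_le_rpow (abs_nonneg _) hvx hgam0.le
    nlinarith [hK0.le]
end

section
/- Let f be C¹ with ∂_w f ≥ λ > 0, and let u : ℝ/ℤ → ℝ be a C² stationary solution of f(x,u,u',u'') = 0 with |u|, |u'|, |u''| all bounded by a constant M. Then u is C³ and |u'''(x)| ≤ C for a constant C depending only on λ, M, and the C¹-norm of f on the corresponding compact set. -/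
open Filter Topology ContinuousLinearMap

/-- `C³` regularity and a third-derivative bound for stationary solutions,
by implicit differentiation of the equation. -/
theorem stmt_5 (lam M K : ℝ) (hlam : 0 < lam) (hM : 0 ≤ M) (hK : 0 ≤ K) :
    ∃ C : ℝ, ∀ (f : ℝ × ℝ × ℝ × ℝ → ℝ) (u : ℝ → ℝ),
      ContDiff ℝ 1 f →
      (∀ p : ℝ × ℝ × ℝ × ℝ, lam ≤ fderiv ℝ f p (0, 0, 0, 1)) →
      (∀ p : ℝ × ℝ × ℝ × ℝ,
        |p.2.1| ≤ M → |p.2.2.1| ≤ M → |p.2.2.2| ≤ M →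
        |f p| ≤ K ∧ ‖fderiv ℝ f p‖ ≤ K) →
      ContDiff ℝ 2 u →
      Function.Periodic u 1 →
      (∀ x, |u x| ≤ M) →
      (∀ x, |deriv u x| ≤ M) →
      (∀ x, |deriv (deriv u) x| ≤ M) →
      (∀ x, f (x, u x, deriv u x, deriv (deriv u) x) = 0) →
      ContDiff ℝ 3 u ∧ ∀ x : ℝ, |iteratedDeriv 3 u x| ≤ C := by
  refine ⟨K * (1 + 2 * M) / lam, ?_⟩
  intro f u hf hlow hbound hu hper hb0 hb1 hb2 heq
  set q : ℝ → ℝ := deriv (deriv u) with hqdef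
  -- basic differentiability facts
  have hu2 : ContDiff ℝ (1 + 1) u := by norm_num; exact hu
  have hudiff : Differentiable ℝ u := (contDiff_succ_iff_deriv.mp hu2).1
  have hder : ContDiff ℝ 1 (deriv u) := (contDiff_succ_iff_deriv.mp hu2).2.2
  have hu1diff : Differentiable ℝ (deriv u) := hder.differentiable one_ne_zero
  have hqcont : Continuous q := (contDiff_one_iff_deriv.mp hder).2
  have hfd : Differentiable ℝ f := hf.differentiable one_ne_zero
  -- Step 1: q = u'' is C¹, by the inverse function theorem
  have hq1 : ContDiff ℝ 1 q := by
    rw [contDiff_iff_contDiffAt]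
    intro x₀
    set z₀ : ℝ × ℝ := (x₀, q x₀) with hz₀
    set L : ℝ × ℝ × ℝ × ℝ →L[ℝ] ℝ := fderiv ℝ f (x₀, u x₀, deriv u x₀, q x₀) with hL
    set α : ℝ := L (1, deriv u x₀, q x₀, 0) with hα
    set β : ℝ := L (0, 0, 0, 1) with hβ
    have hβlam : lam ≤ β := hlow _
    have hβpos : 0 < β := lt_of_lt_of_le hlam hβlam
    set Φ : ℝ × ℝ → ℝ × ℝ := fun z => (z.1, f (z.1, u z.1, deriv u z.1, z.2)) with hΦdef
    have hΦ : ContDiff ℝ 1 Φ := by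
      refine contDiff_fst.prodMk (hf.comp ?_)
      exact contDiff_fst.prodMk (((hu.of_le one_le_two).comp contDiff_fst).prodMk
        ((hder.comp contDiff_fst).prodMk contDiff_snd))
    -- derivative of Φ at z₀
    set G' : ℝ × ℝ →L[ℝ] ℝ × ℝ × ℝ × ℝ :=
      (fst ℝ ℝ ℝ).prod (((deriv u x₀) • fst ℝ ℝ ℝ).prod
        (((q x₀) • fst ℝ ℝ ℝ).prod (snd ℝ ℝ ℝ))) with hG'def
    set A : ℝ × ℝ →L[ℝ] ℝ × ℝ := (fst ℝ ℝ ℝ).prod (L.comp G') with hAdef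
    have hG : HasFDerivAt (fun z : ℝ × ℝ => (z.1, u z.1, deriv u z.1, z.2)) G' z₀ := by
      refine hasFDerivAt_fst.prodMk (HasFDerivAt.prodMk ?_ (HasFDerivAt.prodMk ?_ hasFDerivAt_snd))
      · exact ((hudiff x₀).hasDerivAt).comp_hasFDerivAt z₀ (hasFDerivAt_fst (p := z₀))
      · have h := ((hu1diff x₀).hasDerivAt).comp_hasFDerivAt z₀ (hasFDerivAt_fst (𝕜 := ℝ) (p := z₀)); exact h
    have hAΦ : HasFDerivAt Φ A z₀ := by
      refine hasFDerivAt_fst.prodMk ?_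
      exact ((hfd _).hasFDerivAt).comp z₀ hG
    have hAeval : ∀ v : ℝ × ℝ, A v = (v.1, v.1 * α + v.2 * β) := by
      rintro ⟨a, b⟩
      have hvec : ((a, deriv u x₀ * a, q x₀ * a, b) : ℝ × ℝ × ℝ × ℝ)
          = a • ((1 : ℝ), deriv u x₀, q x₀, (0 : ℝ)) + b • ((0 : ℝ), (0 : ℝ), (0 : ℝ), (1 : ℝ)) := by
        simp [Prod.ext_iff]; constructor <;> ring
      simp only [hAdef, hG'def, prod_apply, coe_comp', Function.comp_apply, coe_fst',
        coe_snd', smul_apply, smul_eq_mul]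
      refine Prod.ext rfl ?_
      show L (a, deriv u x₀ * a, q x₀ * a, b) = a * α + b * β
      rw [hvec, map_add, map_smul, map_smul, smul_eq_mul, smul_eq_mul, hα, hβ]
    have hker : A.ker = ⊥ := by
      rw [LinearMap.ker_eq_bot']
      rintro ⟨a, b⟩ hab
      rw [ContinuousLinearMap.coe_coe, hAeval] at hab
      obtain ⟨ha, hb⟩ := Prod.mk.injEq .. ▸ hab
      have ha' : a = 0 := ha
      subst ha'
      simp only [zero_mul, zero_add] at hb
      have : b = 0 := by
        rcases mul_eq_zero.mp hb with h | h
        · exact h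
        · exact absurd h (ne_of_gt hβpos)
      simp [this]
    have hrange : A.range = ⊤ := by
      rw [LinearMap.range_eq_top]
      rintro ⟨c, d⟩
      refine ⟨(c, (d - c * α) / β), ?_⟩
      rw [ContinuousLinearMap.coe_coe, hAeval]
      refine Prod.ext rfl ?_
      show c * α + (d - c * α) / β * β = d
      field_simp
      ring
    set N := ContinuousLinearEquiv.ofBijective A hker hrange with hNdef
    have hA' : HasFDerivAt Φ (N : ℝ × ℝ →L[ℝ] ℝ × ℝ) z₀ := by
      rw [hNdef, ContinuousLinearEquiv.coe_ofBijective]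
      exact hAΦ
    have hΦx : ContDiffAt ℝ 1 Φ z₀ := hΦ.contDiffAt
    have hgC : ContDiffAt ℝ 1 (hΦx.localInverse hA' one_ne_zero) (Φ z₀) :=
      hΦx.to_localInverse hA' one_ne_zero
    have hΦz₀ : Φ z₀ = (x₀, 0) := by
      simp only [hΦdef]
      exact Prod.ext rfl (heq x₀)
    have hleft : ∀ᶠ z in 𝓝 z₀, hΦx.localInverse hA' one_ne_zero (Φ z) = z :=
      (hΦx.hasStrictFDerivAt' hA' one_ne_zero).eventually_left_inverse
    have hs : ContinuousAt (fun x : ℝ => ((x : ℝ), q x)) x₀ :=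
      continuousAt_id.prodMk hqcont.continuousAt
    have hev : ∀ᶠ x in 𝓝 x₀, hΦx.localInverse hA' one_ne_zero (Φ (x, q x)) = (x, q x) :=
      hs.tendsto.eventually hleft
    have hev2 : q =ᶠ[𝓝 x₀] fun x => (hΦx.localInverse hA' one_ne_zero (x, 0)).2 := by
      refine hev.mono fun x hx => ?_
      have hΦx' : Φ (x, q x) = (x, 0) := Prod.ext rfl (heq x)
      rw [hΦx'] at hx
      exact congrArg Prod.snd hx.symm
    have hgC' : ContDiffAt ℝ 1 (hΦx.localInverse hA' one_ne_zero) (x₀, 0) := hΦz₀ ▸ hgC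
    have hcomp : ContDiffAt ℝ 1 (fun x : ℝ => (hΦx.localInverse hA' one_ne_zero (x, 0)).2) x₀ := by
      have hinner : ContDiffAt ℝ 1 (fun x : ℝ => hΦx.localInverse hA' one_ne_zero (x, 0)) x₀ :=
        hgC'.comp x₀ ((contDiff_id.prodMk contDiff_const).contDiffAt)
      exact contDiff_snd.contDiffAt.comp x₀ hinner
    exact hcomp.congr_of_eventuallyEq hev2
  have hqdiff : Differentiable ℝ q := hq1.differentiable one_ne_zero
  have hu3 : ContDiff ℝ 3 u := by
    have h3 : ContDiff ℝ (1 + 1 + 1) u := by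
      rw [contDiff_succ_iff_deriv]
      refine ⟨hudiff, by simp, ?_⟩
      rw [contDiff_succ_iff_deriv]
      exact ⟨hu1diff, by simp, hq1⟩
    norm_num at h3
    exact h3
  refine ⟨hu3, fun x => ?_⟩
  -- the derivative formula and bound
  set L : ℝ × ℝ × ℝ × ℝ →L[ℝ] ℝ := fderiv ℝ f (x, u x, deriv u x, q x) with hL
  set α : ℝ := L (1, deriv u x, q x, 0) with hα
  set β : ℝ := L (0, 0, 0, 1) with hβ
  have hβlam : lam ≤ β := hlow _
  have hβpos : 0 < β := lt_of_lt_of_le hlam hβlam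
  have hqd : HasDerivAt q (deriv q x) x := (hqdiff x).hasDerivAt
  have hu1d : HasDerivAt (deriv u) (q x) x := (hu1diff x).hasDerivAt
  have hud : HasDerivAt u (deriv u x) x := (hudiff x).hasDerivAt
  have hp : HasDerivAt (fun y : ℝ => ((y : ℝ), u y, deriv u y, q y))
      (1, deriv u x, q x, deriv q x) x :=
    (hasDerivAt_id x).prodMk (hud.prodMk (hu1d.prodMk hqd))
  have hcz : HasDerivAt (fun y => f (y, u y, deriv u y, q y))
      (L (1, deriv u x, q x, deriv q x)) x :=
    ((hfd _).hasFDerivAt).comp_hasDerivAt x hp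
  have hzero : (fun y => f (y, u y, deriv u y, q y)) = fun _ => (0 : ℝ) :=
    funext fun y => heq y
  have h0 : L (1, deriv u x, q x, deriv q x) = 0 := by
    rw [hzero] at hcz
    exact hcz.unique (hasDerivAt_const x 0)
  have hvec : ((1, deriv u x, q x, deriv q x) : ℝ × ℝ × ℝ × ℝ)
      = ((1 : ℝ), deriv u x, q x, (0 : ℝ))
        + (deriv q x) • ((0 : ℝ), (0 : ℝ), (0 : ℝ), (1 : ℝ)) := by
    simp [Prod.ext_iff]
  rw [hvec, map_add, map_smul, smul_eq_mul] at h0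
  have hderiv_q : deriv q x = -α / β := by
    field_simp
    linarith [h0]
  -- norm bound
  have hLn : ‖L‖ ≤ K := (hbound (x, u x, deriv u x, q x) (hb0 x) (hb1 x) (hb2 x)).2
  have hvnorm : ‖((1 : ℝ), deriv u x, q x, (0 : ℝ))‖ ≤ 1 + 2 * M := by
    rw [Prod.norm_def, Prod.norm_def, Prod.norm_def]
    simp only [Real.norm_eq_abs, norm_one]
    have h1 : |(1 : ℝ)| = 1 := abs_one
    have := hb1 x
    have := hb2 x
    refine max_le (by linarith) (max_le (by linarith) (max_le (by linarith) (by simp; linarith)))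
  have hαbound : |α| ≤ K * (1 + 2 * M) := by
    calc |α| ≤ ‖L‖ * ‖((1 : ℝ), deriv u x, q x, (0 : ℝ))‖ := L.le_opNorm _
      _ ≤ K * (1 + 2 * M) := by
        apply mul_le_mul hLn hvnorm (norm_nonneg _) hK
  have hit : iteratedDeriv 3 u x = deriv q x := by
    simp [iteratedDeriv_succ, iteratedDeriv_zero, hqdef]
  rw [hit, hderiv_q]
  rw [abs_div, abs_neg, abs_of_pos hβpos]
  calc |α| / β ≤ (K * (1 + 2 * M)) / β := by gcongr
    _ ≤ K * (1 + 2 * M) / lam := by gcongr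
end

section
/- Let (u_i)_{i ∈ ℤ/dℤ} be a d-periodic sequence satisfying the discrete stationary equation f(i/d, u_i, Δu_i, Δ²u_i) + E_i = 0, where f satisfies uniform parabolicity with constant λ and sub-quadratic growth |f(x,u,v,0)| ≤ C(1+|v|^γ), γ < 2, |u_i| ≤ M, and |E_i| ≤ C/d. Then Σ_i d·|u_{i+1} - u_i|² ≤ C' with C' independent of d. -/
open Finset

private lemma shift_sum (d : ℕ) (g : ℤ → ℝ) (hg : ∀ i : ℤ, g (i + d) = g i) :
    ∑ i ∈ Finset.range d, g ((i : ℤ) + 1) = ∑ i ∈ Finset.range d, g (i : ℤ) := by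
  have h1 : ∑ i ∈ Finset.range (d+1), g (i:ℤ) =
      (∑ i ∈ Finset.range d, g ((i:ℤ)+1)) + g 0 := by
    rw [Finset.sum_range_succ']
    push_cast
    rw [add_comm]
  have h2 : ∑ i ∈ Finset.range (d+1), g (i:ℤ) =
      (∑ i ∈ Finset.range d, g (i:ℤ)) + g d := Finset.sum_range_succ _ _
  have h3 : g (d:ℤ) = g 0 := by simpa using hg 0
  rw [h3] at h2; linarith

private lemma mvt_bound (lam : ℝ) (hlam : 0 < lam) (F F' : ℝ → ℝ)
    (hderiv : ∀ z, HasDerivAt F (F' z) z) (hlow : ∀ z, lam ≤ F' z) (w : ℝ) :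
    lam * |w| ≤ |F w - F 0| := by
  rcases lt_trichotomy w 0 with hw | hw | hw
  · obtain ⟨c, _, hc⟩ := exists_hasDerivAt_eq_slope F F' (show w < 0 from hw)
      (fun z _ => (hderiv z).continuousAt.continuousWithinAt) (fun z _ => hderiv z)
    have h0 : (0:ℝ) - w > 0 := by linarith
    have hl := hlow c
    rw [hc] at hl
    have h1 : lam * (0 - w) ≤ F 0 - F w := by
      rw [le_div_iff₀ h0] at hl; linarith
    have h2 : F 0 - F w ≤ |F w - F 0| := by
      rw [abs_sub_comm]; exact le_abs_self _
    rw [abs_of_neg hw]; linarith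
  · simp [hw]
  · obtain ⟨c, _, hc⟩ := exists_hasDerivAt_eq_slope F F' (show (0:ℝ) < w from hw)
      (fun z _ => (hderiv z).continuousAt.continuousWithinAt) (fun z _ => hderiv z)
    have h0 : w - (0:ℝ) > 0 := by linarith
    have hl := hlow c
    rw [hc] at hl
    have h1 : lam * (w - 0) ≤ F w - F 0 := by
      rw [le_div_iff₀ h0] at hl; linarith
    have h2 : F w - F 0 ≤ |F w - F 0| := le_abs_self _
    rw [abs_of_pos hw]; linarith

private lemma rpow_bound (gam R : ℝ) (hg0 : 0 < gam) (hg2 : gam < 2) (hR : 0 < R) (v : ℝ) :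
    |v| ^ gam ≤ R ^ (gam - 2) * v ^ 2 + R ^ gam := by
  rcases le_or_gt (|v|) R with h | h
  · have h1 : |v| ^ gam ≤ R ^ gam := Real.rpow_le_rpow (abs_nonneg v) h hg0.le
    have h2 : 0 ≤ R ^ (gam - 2) * v ^ 2 := by positivity
    linarith
  · have hv : 0 < |v| := hR.trans h
    have h1 : |v| ^ (gam - 2) ≤ R ^ (gam - 2) :=
      Real.rpow_le_rpow_of_nonpos hR h.le (by linarith)
    have h2 : |v| ^ gam = |v| ^ (gam - 2) * v ^ 2 := by
      rw [show gam = (gam - 2) + 2 by ring, Real.rpow_add hv]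
      rw [show ((gam:ℝ) - 2 + 2) - 2 = gam - 2 by ring]
      congr 1
      rw [show (2:ℝ) = ((2:ℕ):ℝ) by norm_num, Real.rpow_natCast, sq_abs]
    have h3 : 0 < R ^ gam := Real.rpow_pos_of_pos hR _
    nlinarith [sq_nonneg v]

/-- Uniform (in `d`) discrete Dirichlet-energy bound for solutions of the discretized
stationary equation. -/
theorem stmt_8 (lam C gam M : ℝ) (hlam : 0 < lam) (hlam1 : lam ≤ 1)
    (hC : 0 < C) (hgam0 : 0 < gam) (hgam2 : gam < 2) (hM : 0 ≤ M) :
    ∃ C' : ℝ, ∀ (d : ℕ), 1 ≤ d →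
      ∀ (f f' : ℝ → ℝ → ℝ → ℝ → ℝ) (u : ℤ → ℝ) (E : ℤ → ℝ),
      (∀ x v w z, HasDerivAt (fun s => f x v w s) (f' x v w z) z) →
      (∀ x v w z, lam ≤ f' x v w z) →
      (∀ x v w z, f' x v w z ≤ lam⁻¹) →
      (∀ x v w, |v| ≤ M → |f x v w 0| ≤ C * (1 + |w| ^ gam)) →
      (∀ i : ℤ, u (i + d) = u i) →
      (∀ i : ℤ, |u i| ≤ M) →
      (∀ i : ℤ, |E i| ≤ C / d) →
      (∀ i : ℤ,
        f ((i : ℝ) / d) (u i) ((d : ℝ) * (u (i + 1) - u i))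
          ((d : ℝ)^2 * (u (i + 1) - 2 * u i + u (i - 1))) + E i = 0) →
      ∑ i ∈ Finset.range d, (d : ℝ) * (u ((i : ℤ) + 1) - u (i : ℤ)) ^ 2 ≤ C' := by
  set K := (M + 1) * C / lam with hKdef
  have hKpos : 0 < K := by positivity
  set R := (2 * K) ^ ((1:ℝ) / (2 - gam)) with hRdef
  have hRpos : 0 < R := Real.rpow_pos_of_pos (by linarith) _
  have hRe : R ^ (gam - 2) = (2 * K)⁻¹ := by
    rw [hRdef, ← Real.rpow_mul (by linarith : (0:ℝ) ≤ 2 * K)]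
    have h2g : (2:ℝ) - gam ≠ 0 := by linarith
    have : (1 / (2 - gam)) * (gam - 2) = -1 := by field_simp; ring
    rw [this, Real.rpow_neg_one]
  refine ⟨2 * K * (2 + R ^ gam), ?_⟩
  intro d hd f f' u E hderiv hlow _hupp hgrowth hper hbound hE heq
  have hd1 : (1:ℝ) ≤ (d:ℝ) := by exact_mod_cast hd
  have hdpos : (0:ℝ) < (d:ℝ) := by linarith
  set v : ℤ → ℝ := fun i => (d:ℝ) * (u (i + 1) - u i) with hvdef
  set w : ℤ → ℝ := fun i => (d:ℝ)^2 * (u (i + 1) - 2 * u i + u (i - 1)) with hwdef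
  -- Step 1: pointwise bound on |w i|
  have hWbd : ∀ i : ℤ, |w i| ≤ C / lam * (2 + |v i| ^ gam) := by
    intro i
    have heqi := heq i
    have hmvt := mvt_bound lam hlam (fun z => f ((i:ℝ)/d) (u i) (v i) z)
      (fun z => f' ((i:ℝ)/d) (u i) (v i) z) (hderiv _ _ _) (hlow _ _ _) (w i)
    have hfw : f ((i:ℝ)/d) (u i) (v i) (w i) = - E i := by
      rw [hvdef, hwdef]; simp only []; linarith
    rw [hfw] at hmvt
    have hf0 : |f ((i:ℝ)/d) (u i) (v i) 0| ≤ C * (1 + |v i| ^ gam) :=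
      hgrowth _ _ _ (hbound i)
    have hEd : |E i| ≤ C := (hE i).trans (by
      rw [div_le_iff₀ hdpos]; nlinarith)
    have habs : |(- E i) - f ((i:ℝ)/d) (u i) (v i) 0| ≤ |E i| + |f ((i:ℝ)/d) (u i) (v i) 0| := by
      calc |(- E i) - f ((i:ℝ)/d) (u i) (v i) 0| ≤ |(- E i)| + |f ((i:ℝ)/d) (u i) (v i) 0| :=
            abs_sub _ _
        _ = |E i| + |f ((i:ℝ)/d) (u i) (v i) 0| := by rw [abs_neg]
    have hrp : (0:ℝ) ≤ |v i| ^ gam := Real.rpow_nonneg (abs_nonneg _) _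
    have h1 : lam * |w i| ≤ C * (2 + |v i| ^ gam) := by
      calc lam * |w i| ≤ |(- E i) - f ((i:ℝ)/d) (u i) (v i) 0| := hmvt
        _ ≤ |E i| + |f ((i:ℝ)/d) (u i) (v i) 0| := habs
        _ ≤ C + C * (1 + |v i| ^ gam) := add_le_add hEd hf0
        _ = C * (2 + |v i| ^ gam) := by ring
    rw [div_mul_eq_mul_div, le_div_iff₀ hlam]
    linarith [mul_comm lam (|w i|)]
  -- Step 2: summation by parts
  have hvper : ∀ i : ℤ, (fun i => (d:ℝ) * (u i - u (i-1)) * u i) (i + d)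
      = (fun i => (d:ℝ) * (u i - u (i-1)) * u i) i := by
    intro i
    simp only []
    have h1 : u (i + d) = u i := hper i
    have h2 : u (i + d - 1) = u (i - 1) := by
      have := hper (i - 1); rw [show i - 1 + d = i + d - 1 by ring] at this; exact this
    rw [h1, h2]
  have hshift := shift_sum d (fun i => (d:ℝ) * (u i - u (i-1)) * u i) hvper
  have hsum : ∑ i ∈ Finset.range d, (d:ℝ) * (u ((i:ℤ) + 1) - u (i:ℤ)) ^ 2
      = ∑ i ∈ Finset.range d, (-(1/(d:ℝ))) * (u (i:ℤ) * w (i:ℤ)) := by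
    have e1 : ∀ i ∈ Finset.range d, (d:ℝ) * (u ((i:ℤ) + 1) - u (i:ℤ)) ^ 2
        = (fun j : ℤ => (d:ℝ) * (u j - u (j-1)) * u j) ((i:ℤ) + 1)
          - (d:ℝ) * (u ((i:ℤ) + 1) - u (i:ℤ)) * u (i:ℤ) := by
      intro i _
      simp only []
      rw [show (i:ℤ) + 1 - 1 = (i:ℤ) by ring]
      ring
    rw [Finset.sum_congr rfl e1, Finset.sum_sub_distrib, hshift, ← Finset.sum_sub_distrib]
    apply Finset.sum_congr rfl
    intro i _
    simp only [hwdef]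
    field_simp
    ring
  rw [hsum]
  -- Step 3: estimate
  have hterm : ∀ i ∈ Finset.range d, (-(1/(d:ℝ))) * (u (i:ℤ) * w (i:ℤ))
      ≤ (1/(d:ℝ)) * (K * (2 + |v (i:ℤ)| ^ gam)) := by
    intro i _
    have h1 : (-(1/(d:ℝ))) * (u (i:ℤ) * w (i:ℤ)) ≤ (1/(d:ℝ)) * (M * |w (i:ℤ)|) := by
      have habs : -(u (i:ℤ) * w (i:ℤ)) ≤ M * |w (i:ℤ)| := by
        calc -(u (i:ℤ) * w (i:ℤ)) ≤ |u (i:ℤ) * w (i:ℤ)| := neg_le_abs _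
          _ = |u (i:ℤ)| * |w (i:ℤ)| := abs_mul _ _
          _ ≤ M * |w (i:ℤ)| := mul_le_mul_of_nonneg_right (hbound _) (abs_nonneg _)
      have hinv : (0:ℝ) ≤ 1/(d:ℝ) := by positivity
      calc (-(1/(d:ℝ))) * (u (i:ℤ) * w (i:ℤ)) = (1/(d:ℝ)) * (-(u (i:ℤ) * w (i:ℤ))) := by ring
        _ ≤ (1/(d:ℝ)) * (M * |w (i:ℤ)|) := mul_le_mul_of_nonneg_left habs hinv
    have h2 : M * |w (i:ℤ)| ≤ K * (2 + |v (i:ℤ)| ^ gam) := by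
      have hrp : (0:ℝ) ≤ |v (i:ℤ)| ^ gam := Real.rpow_nonneg (abs_nonneg _) _
      have := hWbd (i:ℤ)
      have hMK : M * (C / lam) ≤ K := by
        rw [hKdef, ← mul_div_assoc]
        gcongr
        nlinarith
      calc M * |w (i:ℤ)| ≤ M * (C / lam * (2 + |v (i:ℤ)| ^ gam)) :=
            mul_le_mul_of_nonneg_left this hM
        _ = (M * (C / lam)) * (2 + |v (i:ℤ)| ^ gam) := by ring
        _ ≤ K * (2 + |v (i:ℤ)| ^ gam) :=
            mul_le_mul_of_nonneg_right hMK (by linarith)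
    calc (-(1/(d:ℝ))) * (u (i:ℤ) * w (i:ℤ)) ≤ (1/(d:ℝ)) * (M * |w (i:ℤ)|) := h1
      _ ≤ (1/(d:ℝ)) * (K * (2 + |v (i:ℤ)| ^ gam)) :=
          mul_le_mul_of_nonneg_left h2 (by positivity)
  -- Step 4: combine
  have hone : ∑ _i ∈ Finset.range d, (1/(d:ℝ)) = 1 := by
    rw [Finset.sum_const, Finset.card_range, nsmul_eq_mul]
    field_simp
  have hterm2 : ∀ i ∈ Finset.range d, (1/(d:ℝ)) * (K * (2 + |v (i:ℤ)| ^ gam))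
      ≤ (2*K + K*R^gam) * (1/(d:ℝ))
        + (K * R^(gam-2)) * ((d:ℝ) * (u ((i:ℤ)+1) - u (i:ℤ))^2) := by
    intro i _
    have hb := rpow_bound gam R hgam0 hgam2 hRpos (v (i:ℤ))
    have hv2 : (v (i:ℤ))^2 = (d:ℝ)^2 * (u ((i:ℤ)+1) - u (i:ℤ))^2 := by
      simp only [hvdef]; ring
    have h1 : K * (2 + |v (i:ℤ)| ^ gam)
        ≤ K * (2 + (R^(gam-2) * (v (i:ℤ))^2 + R^gam)) :=
      mul_le_mul_of_nonneg_left (by linarith) hKpos.le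
    have h2 : (1/(d:ℝ)) * (K * (2 + |v (i:ℤ)| ^ gam))
        ≤ (1/(d:ℝ)) * (K * (2 + (R^(gam-2) * (v (i:ℤ))^2 + R^gam))) :=
      mul_le_mul_of_nonneg_left h1 (by positivity)
    have h3 : (1/(d:ℝ)) * (K * (2 + (R^(gam-2) * (v (i:ℤ))^2 + R^gam)))
        = (2*K + K*R^gam) * (1/(d:ℝ))
          + (K * R^(gam-2)) * ((d:ℝ) * (u ((i:ℤ)+1) - u (i:ℤ))^2) := by
      rw [hv2]
      field_simp
      ring
    linarith
  have hS0 : 0 ≤ ∑ i ∈ Finset.range d, (d:ℝ) * (u ((i:ℤ)+1) - u (i:ℤ))^2 :=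
    Finset.sum_nonneg (fun i _ => by positivity)
  have hchain : ∑ i ∈ Finset.range d, (d:ℝ) * (u ((i:ℤ)+1) - u (i:ℤ))^2
      ≤ (2*K + K*R^gam)
        + (K * R^(gam-2)) * ∑ i ∈ Finset.range d, (d:ℝ) * (u ((i:ℤ)+1) - u (i:ℤ))^2 := by
    calc ∑ i ∈ Finset.range d, (d:ℝ) * (u ((i:ℤ)+1) - u (i:ℤ))^2
        = ∑ i ∈ Finset.range d, (-(1/(d:ℝ))) * (u (i:ℤ) * w (i:ℤ)) := hsum
      _ ≤ ∑ i ∈ Finset.range d, (1/(d:ℝ)) * (K * (2 + |v (i:ℤ)| ^ gam)) :=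
          Finset.sum_le_sum hterm
      _ ≤ ∑ i ∈ Finset.range d, ((2*K + K*R^gam) * (1/(d:ℝ))
            + (K * R^(gam-2)) * ((d:ℝ) * (u ((i:ℤ)+1) - u (i:ℤ))^2)) :=
          Finset.sum_le_sum hterm2
      _ = (2*K + K*R^gam) * (∑ _i ∈ Finset.range d, (1/(d:ℝ)))
            + (K * R^(gam-2)) * ∑ i ∈ Finset.range d, (d:ℝ) * (u ((i:ℤ)+1) - u (i:ℤ))^2 := by
          rw [Finset.sum_add_distrib, ← Finset.mul_sum, ← Finset.mul_sum]
      _ = (2*K + K*R^gam)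
            + (K * R^(gam-2)) * ∑ i ∈ Finset.range d, (d:ℝ) * (u ((i:ℤ)+1) - u (i:ℤ))^2 := by
          rw [hone, mul_one]
  have hhalf : K * R^(gam-2) = 1/2 := by
    rw [hRe]
    field_simp
  rw [hhalf] at hchain
  have hRg : (0:ℝ) ≤ R^gam := (Real.rpow_pos_of_pos hRpos _).le
  linarith
end

section
/- Let φ_d, ψ_d : [0,1] → ℝ be continuous piecewise-linear functions with breakpoints at i/d, determined by values u_i^d and Δu_i^d = d(u_{i+1}^d - u_i^d) respectively. Suppose φ_d → u and ψ_d → v uniformly on [0,1] as d → ∞, and that |Δ²u_i^d| ≤ C uniformly. Then u is differentiable on (0,1) with u' = v. -/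
/-- The piecewise-linear interpolation of `(u 0, …, u d)` with breakpoints `i/d`. -/
noncomputable def PL (d : ℕ) (u : ℕ → ℝ) : ℝ → ℝ :=
  fun x => u ⌊(d : ℝ) * x⌋₊ +
    ((d : ℝ) * x - ⌊(d : ℝ) * x⌋₊) * (u ⌈(d : ℝ) * x⌉₊ - u ⌊(d : ℝ) * x⌋₊)

/-- `PL` takes the value `u k` at the grid point `k/d`. -/
lemma PL_grid (d k : ℕ) (hd : 0 < d) (u : ℕ → ℝ) : PL d u ((k : ℝ) / d) = u k := by
  have hd' : (d : ℝ) ≠ 0 := by positivity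
  have h : (d : ℝ) * ((k : ℝ) / d) = (k : ℝ) := by field_simp
  simp [PL, h, Nat.floor_natCast, Nat.ceil_natCast]

set_option maxHeartbeats 1000000 in
lemma key_eq (uu : ℕ → ℕ → ℝ) (u v : ℝ → ℝ)
    (hv : Continuous v)
    (hφ : TendstoUniformlyOn (fun d => PL d (uu d)) u Filter.atTop (Set.Icc 0 1))
    (hψ : TendstoUniformlyOn
      (fun d => PL d (fun i => (d : ℝ) * (uu d (i + 1) - uu d i))) v Filter.atTop
      (Set.Icc 0 1)) :
    ∀ x ∈ Set.Icc (0:ℝ) 1, u x = u 0 + ∫ t in (0:ℝ)..x, v t := by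
  intro x hx
  obtain ⟨hx0, hx1⟩ := hx
  -- bound on v
  obtain ⟨M, hM⟩ : ∃ M : ℝ, ∀ y ∈ Set.Icc (0:ℝ) 1, |v y| ≤ M := by
    obtain ⟨M, hM⟩ := (isCompact_Icc (a := (0:ℝ)) (b := 1)).exists_bound_of_continuousOn
      hv.continuousOn
    exact ⟨M, fun y hy => hM y hy⟩
  have hM0 : 0 ≤ M := le_trans (abs_nonneg _) (hM 0 (by norm_num))
  set E : ℝ := u x - (u 0 + ∫ t in (0:ℝ)..x, v t) with hE
  have main : ∀ ε : ℝ, 0 < ε → |E| ≤ ε := by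
    intro ε hε
    -- uniform continuity of v
    obtain ⟨δ, hδ0, hδ⟩ := Metric.uniformContinuousOn_iff.mp
      ((isCompact_Icc (a := (0:ℝ)) (b := 1)).uniformContinuousOn_of_continuous
        hv.continuousOn) (ε/8) (by linarith)
    -- choose d
    have h1 := (Metric.tendstoUniformlyOn_iff.mp hφ (ε/8) (by linarith))
    have h2 := (Metric.tendstoUniformlyOn_iff.mp hψ (ε/8) (by linarith))
    have h3 : ∀ᶠ d : ℕ in Filter.atTop, (2/δ : ℝ) ≤ (d : ℝ) ∧
        8*(M+ε/8)/ε ≤ (d:ℝ) ∧ 8*M/ε ≤ (d:ℝ) ∧ 1 ≤ d := by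
      have A := Filter.Tendsto.eventually_ge_atTop
        (tendsto_natCast_atTop_atTop (R := ℝ)) (2/δ)
      have B := Filter.Tendsto.eventually_ge_atTop
        (tendsto_natCast_atTop_atTop (R := ℝ)) (8*(M+ε/8)/ε)
      have C := Filter.Tendsto.eventually_ge_atTop
        (tendsto_natCast_atTop_atTop (R := ℝ)) (8*M/ε)
      have D : ∀ᶠ d : ℕ in Filter.atTop, 1 ≤ d := Filter.eventually_ge_atTop 1
      filter_upwards [A, B, C, D] with d a b c e using ⟨a, b, c, e⟩
    obtain ⟨d, ⟨hφd, hψd⟩, hd1, hd2, hd3, hd4⟩ := ((h1.and h2).and h3).exists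
    have hdpos : (0:ℝ) < d := by exact_mod_cast hd4
    have hdne : (d:ℝ) ≠ 0 := ne_of_gt hdpos
    set j : ℕ := ⌊(d : ℝ) * x⌋₊ with hj
    have hjle : (j : ℝ) ≤ (d:ℝ) * x := Nat.floor_le (by positivity)
    have hjlt : (d:ℝ) * x < (j : ℝ) + 1 := Nat.lt_floor_add_one _
    have hjd : j ≤ d := by
      have : (j : ℝ) ≤ (d : ℝ) := le_trans hjle (by nlinarith)
      exact_mod_cast this
    have hjd' : (j : ℝ) / d ≤ x := by
      rw [div_le_iff₀ hdpos]; linarith [hjle]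
    have hjd'' : x - (j:ℝ)/d ≤ 1/d := by
      rw [sub_le_iff_le_add, ← add_div, le_div_iff₀ hdpos]; linarith
    have hjIcc : ∀ k : ℕ, k ≤ d → (k : ℝ)/d ∈ Set.Icc (0:ℝ) 1 := by
      intro k hk
      constructor
      · positivity
      · rw [div_le_one hdpos]; exact_mod_cast hk
    -- grid values of ψ
    have hψgrid : ∀ k : ℕ, k ≤ d →
        |(d:ℝ) * (uu d (k+1) - uu d k) - v ((k:ℝ)/d)| < ε/8 := by
      intro k hk
      have := hψd ((k:ℝ)/d) (hjIcc k hk)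
      rw [PL_grid d k (by omega)] at this
      rw [abs_sub_comm]
      simpa [Real.dist_eq] using this
    -- Term 2 : |PL x - uu d j| ≤ ε/8
    have T2 : |PL d (uu d) x - uu d j| ≤ ε/8 := by
      have hceil : ⌈(d:ℝ)*x⌉₊ = j ∨ ⌈(d:ℝ)*x⌉₊ = j + 1 := by
        have h1 : j ≤ ⌈(d:ℝ)*x⌉₊ := Nat.floor_le_ceil _
        have h2 : ⌈(d:ℝ)*x⌉₊ ≤ j + 1 := Nat.ceil_le_floor_add_one _
        omega
      rcases hceil with h | h
      · simp only [PL, ← hj, h, sub_self, mul_zero, add_sub_cancel_left, abs_zero]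
        positivity
      · have hfr0 : (0:ℝ) ≤ (d:ℝ)*x - j := by linarith
        have hfr1 : (d:ℝ)*x - j ≤ 1 := by linarith
        have hgrid := hψgrid j hjd
        have hvb := hM ((j:ℝ)/d) (hjIcc j hjd)
        have hbd2 : |(d:ℝ) * (uu d (j+1) - uu d j)| ≤ M + ε/8 := by
          calc |(d:ℝ) * (uu d (j+1) - uu d j)|
              ≤ |(d:ℝ) * (uu d (j+1) - uu d j) - v ((j:ℝ)/d)| + |v ((j:ℝ)/d)| := by
                have := abs_sub_abs_le_abs_sub ((d:ℝ) * (uu d (j+1) - uu d j)) (v ((j:ℝ)/d))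
                have h' := abs_add_le ((d:ℝ) * (uu d (j+1) - uu d j) - v ((j:ℝ)/d)) (v ((j:ℝ)/d))
                simpa using h'
            _ ≤ ε/8 + M := by linarith [le_of_lt hgrid]
            _ = M + ε/8 := by ring
        have hud : |uu d (j+1) - uu d j| ≤ (M + ε/8)/d := by
          rw [abs_mul, abs_of_pos hdpos] at hbd2
          rw [le_div_iff₀ hdpos]
          linarith [hbd2]
        have : |PL d (uu d) x - uu d j| = ((d:ℝ)*x - j) * |uu d (j+1) - uu d j| := by
          simp only [PL, ← hj, h]
          rw [add_sub_cancel_left, abs_mul, abs_of_nonneg hfr0]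
        rw [this]
        calc ((d:ℝ)*x - j) * |uu d (j+1) - uu d j| ≤ 1 * ((M + ε/8)/d) := by
              apply mul_le_mul hfr1 hud (abs_nonneg _) zero_le_one
          _ ≤ ε/8 := by
              rw [one_mul, div_le_iff₀ hdpos]
              have : 8*(M+ε/8)/ε ≤ (d:ℝ) := hd2
              rw [div_le_iff₀ hε] at this
              nlinarith
    -- integrability
    have hint : ∀ a b : ℝ, IntervalIntegrable v MeasureTheory.volume a b :=
      fun a b => hv.intervalIntegrable a b
    -- Term 3+4 : telescoping sum vs integral
    have hsplit : ∫ t in (0:ℝ)..((j:ℝ)/d), v t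
        = ∑ k ∈ Finset.range j, ∫ t in ((k:ℝ)/d)..(((k:ℝ)+1)/d), v t := by
      have := intervalIntegral.sum_integral_adjacent_intervals
        (a := fun k : ℕ => (k:ℝ)/d) (n := j) (f := v) (μ := MeasureTheory.volume)
        (fun k _ => hint _ _)
      simp only [Nat.cast_zero, zero_div] at this
      rw [← this]
      apply Finset.sum_congr rfl
      intro k _
      norm_num
    have htel : uu d j - uu d 0 = ∑ k ∈ Finset.range j, (uu d (k+1) - uu d k) :=
      (Finset.sum_range_sub (fun k => uu d k) j).symm
    have T34 : |uu d j - uu d 0 - ∫ t in (0:ℝ)..((j:ℝ)/d), v t| ≤ ε/4 := by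
      rw [htel, hsplit, ← Finset.sum_sub_distrib]
      refine le_trans (Finset.abs_sum_le_sum_abs _ _) ?_
      have hterm : ∀ k ∈ Finset.range j,
          |(uu d (k+1) - uu d k) - ∫ t in ((k:ℝ)/d)..(((k:ℝ)+1)/d), v t| ≤ ε/4/d := by
        intro k hk
        have hkd : k ≤ d := le_trans (le_of_lt (Finset.mem_range.mp hk)) hjd
        have hk1d : k + 1 ≤ d := by
          have := Finset.mem_range.mp hk; omega
        have hlen : ((k:ℝ)+1)/d - (k:ℝ)/d = 1/d := by field_simp; ring
        -- |∫ v - v(k/d)/d| ≤ ε/8/d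
        have hIa : |(∫ t in ((k:ℝ)/d)..(((k:ℝ)+1)/d), v t) - v ((k:ℝ)/d) * (1/d)| ≤ ε/8 * (1/d) := by
          have heq : (∫ t in ((k:ℝ)/d)..(((k:ℝ)+1)/d), v t) - v ((k:ℝ)/d) * (1/d)
              = ∫ t in ((k:ℝ)/d)..(((k:ℝ)+1)/d), (v t - v ((k:ℝ)/d)) := by
            rw [intervalIntegral.integral_sub (hint _ _) (intervalIntegrable_const)]
            rw [intervalIntegral.integral_const, hlen, smul_eq_mul]
            ring
          rw [heq]
          have hb : ∀ t ∈ Set.uIoc ((k:ℝ)/d) (((k:ℝ)+1)/d), ‖v t - v ((k:ℝ)/d)‖ ≤ ε/8 := by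
            intro t ht
            rw [Set.uIoc_of_le (by rw [div_le_div_iff_of_pos_right hdpos]; linarith)] at ht
            obtain ⟨ht1, ht2⟩ := ht
            have htIcc : t ∈ Set.Icc (0:ℝ) 1 := by
              constructor
              · have : (0:ℝ) ≤ (k:ℝ)/d := by positivity
                linarith [ht1]
              · have : ((k:ℝ)+1)/d ≤ 1 := by
                  rw [div_le_one hdpos]; exact_mod_cast hk1d
                linarith
            have hdist : dist t ((k:ℝ)/d) < δ := by
              rw [Real.dist_eq, abs_of_pos (by linarith [ht1] : (0:ℝ) < t - (k:ℝ)/d)]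
              have h1d : (1:ℝ)/d ≤ δ/2 := by
                have h2d : 2 ≤ (d:ℝ) * δ := (div_le_iff₀ hδ0).mp hd1
                rw [div_le_div_iff₀ hdpos (by norm_num : (0:ℝ) < 2)]
                nlinarith
              have : t - (k:ℝ)/d ≤ 1/d := by linarith [ht2, hlen.symm.le]
              linarith
            have := hδ t htIcc ((k:ℝ)/d) (hjIcc k hkd) hdist
            rw [Real.dist_eq] at this
            simpa using le_of_lt this
          have hnic := intervalIntegral.norm_integral_le_of_norm_le_const hb
          have habs : |((k:ℝ)+1)/d - (k:ℝ)/d| = 1/(d:ℝ) := by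
            rw [hlen]; exact abs_of_pos (by positivity)
          rw [habs] at hnic
          simpa using hnic
        -- |u_{k+1}-u_k - v(k/d)/d| ≤ ε/8/d
        have hIb : |(uu d (k+1) - uu d k) - v ((k:ℝ)/d) * (1/d)| ≤ ε/8 * (1/d) := by
          have hmul : (d:ℝ) * ((uu d (k+1) - uu d k) - v ((k:ℝ)/d) * (1/d))
              = (d:ℝ) * (uu d (k+1) - uu d k) - v ((k:ℝ)/d) := by
            field_simp
          have h' : |(uu d (k+1) - uu d k) - v ((k:ℝ)/d) * (1/d)|
              = |(d:ℝ) * (uu d (k+1) - uu d k) - v ((k:ℝ)/d)| / d := by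
            rw [← hmul, abs_mul, abs_of_pos hdpos, mul_div_cancel_left₀ _ hdne]
          rw [h', div_le_iff₀ hdpos]
          have h8 : ε/8 * (1/(d:ℝ)) * d = ε/8 := by field_simp
          rw [h8]
          exact le_of_lt (hψgrid k hkd)
        calc |(uu d (k+1) - uu d k) - ∫ t in ((k:ℝ)/d)..(((k:ℝ)+1)/d), v t|
            ≤ |(uu d (k+1) - uu d k) - v ((k:ℝ)/d) * (1/d)|
              + |v ((k:ℝ)/d) * (1/d) - ∫ t in ((k:ℝ)/d)..(((k:ℝ)+1)/d), v t| :=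
              abs_sub_le _ _ _
          _ ≤ ε/8 * (1/d) + ε/8 * (1/d) := by
              refine add_le_add hIb ?_
              rw [abs_sub_comm]
              exact hIa
          _ = ε/4/d := by ring
      calc ∑ k ∈ Finset.range j, |(uu d (k+1) - uu d k) - ∫ t in ((k:ℝ)/d)..(((k:ℝ)+1)/d), v t|
          ≤ ∑ _k ∈ Finset.range j, ε/4/d := Finset.sum_le_sum hterm
        _ = j * (ε/4/d) := by rw [Finset.sum_const, Finset.card_range]; ring
        _ ≤ ε/4 := by
            have hjd2 : (j:ℝ) ≤ d := by exact_mod_cast hjd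
            have hstep : (j:ℝ) * (ε/4/d) ≤ (d:ℝ) * (ε/4/d) :=
              mul_le_mul_of_nonneg_right hjd2 (by positivity)
            have hdd : (d:ℝ) * (ε/4/d) = ε/4 := by field_simp
            linarith
    -- Term 5 : tail integral
    have T5 : |∫ t in ((j:ℝ)/d)..x, v t| ≤ ε/8 := by
      have hb : ∀ t ∈ Set.uIoc ((j:ℝ)/d) x, ‖v t‖ ≤ M := by
        intro t ht
        rw [Set.uIoc_of_le hjd'] at ht
        apply hM
        constructor
        · have : (0:ℝ) ≤ (j:ℝ)/d := by positivity
          linarith [ht.1]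
        · linarith [ht.2]
      have := intervalIntegral.norm_integral_le_of_norm_le_const hb
      have habs : |x - (j:ℝ)/d| = x - (j:ℝ)/d := abs_of_nonneg (by linarith)
      rw [habs] at this
      calc |∫ t in ((j:ℝ)/d)..x, v t| ≤ M * (x - (j:ℝ)/d) := this
        _ ≤ M * (1/d) := by
            apply mul_le_mul_of_nonneg_left hjd'' hM0
        _ ≤ ε/8 := by
            rw [mul_one_div, div_le_iff₀ hdpos]
            have : 8*M/ε ≤ (d:ℝ) := hd3
            rw [div_le_iff₀ hε] at this
            nlinarith
    -- Term 1 and Term 6 from uniform convergence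
    have T1 : |u x - PL d (uu d) x| ≤ ε/8 := by
      have := hφd x ⟨hx0, hx1⟩
      rw [Real.dist_eq] at this
      exact le_of_lt this
    have T6 : |uu d 0 - u 0| ≤ ε/8 := by
      have h0 : ((0:ℕ):ℝ)/d = (0:ℝ) := by norm_num
      have := hφd 0 (by norm_num)
      rw [Real.dist_eq] at this
      have hPL0 : PL d (uu d) 0 = uu d 0 := by
        have := PL_grid d 0 (by omega) (uu d)
        simpa using this
      rw [hPL0] at this
      rw [abs_sub_comm]
      exact le_of_lt this
    -- combine
    have hcomb : ∫ t in (0:ℝ)..x, v t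
        = (∫ t in (0:ℝ)..((j:ℝ)/d), v t) + ∫ t in ((j:ℝ)/d)..x, v t :=
      (intervalIntegral.integral_add_adjacent_intervals (hint _ _) (hint _ _)).symm
    set a1 : ℝ := u x - PL d (uu d) x with ha1
    set a2 : ℝ := PL d (uu d) x - uu d j with ha2
    set a3 : ℝ := uu d j - uu d 0 - ∫ t in (0:ℝ)..((j:ℝ)/d), v t with ha3
    set a4 : ℝ := ∫ t in ((j:ℝ)/d)..x, v t with ha4
    set a5 : ℝ := uu d 0 - u 0 with ha5
    have hEdecomp : E = a1 + a2 + a3 + (-a4) + a5 := by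
      rw [hE, hcomb, ha1, ha2, ha3, ha4, ha5]; ring
    rw [hEdecomp]
    have b1 := abs_add_le (a1 + a2 + a3 + -a4) a5
    have b2 := abs_add_le (a1 + a2 + a3) (-a4)
    have b3 := abs_add_le (a1 + a2) a3
    have b4 := abs_add_le a1 a2
    rw [abs_neg] at b2
    linarith
  have hE0 : E = 0 := by
    by_contra h
    have hpos : 0 < |E| := abs_pos.mpr h
    have := main (|E|/2) (by linarith)
    linarith
  rw [hE] at hE0
  linarith

/-- If the interpolations of values and of discrete derivatives converge uniformly to
`u` and `v`, and the discrete second differences are uniformly bounded, then `u' = v`. -/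
theorem stmt_9 (uu : ℕ → ℕ → ℝ) (u v : ℝ → ℝ) (C : ℝ)
    (hu : Continuous u) (hv : Continuous v)
    (hφ : TendstoUniformlyOn (fun d => PL d (uu d)) u Filter.atTop (Set.Icc 0 1))
    (hψ : TendstoUniformlyOn
      (fun d => PL d (fun i => (d : ℝ) * (uu d (i + 1) - uu d i))) v Filter.atTop
      (Set.Icc 0 1))
    (hbd : ∀ d : ℕ, 1 ≤ d → ∀ i : ℕ, 1 ≤ i → i ≤ d →
      |(d : ℝ)^2 * (uu d (i + 1) - 2 * uu d i + uu d (i - 1))| ≤ C) :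
    ∀ x ∈ Set.Ioo (0:ℝ) 1, HasDerivAt u (v x) x := by
  intro x hx
  have hkey := key_eq uu u v hv hφ hψ
  have hw : HasDerivAt (fun y => u 0 + ∫ t in (0:ℝ)..y, v t) (v x) x := by
    have := (hv.integral_hasStrictDerivAt 0 x).hasDerivAt
    exact this.const_add (u 0)
  apply hw.congr_of_eventuallyEq
  have hopen : Set.Ioo (0:ℝ) 1 ∈ nhds x := (isOpen_Ioo).mem_nhds hx
  filter_upwards [hopen] with y hy
  exact hkey y ⟨le_of_lt hy.1, le_of_lt hy.2⟩
end

section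
/- Let h : ℝ³ → ℝ be continuous with h > 0 on the set {(x,u,p) : u·p ≠ 0}, and let g : ℝ → ℝ be continuous. Suppose u : ℝ/ℤ → ℝ is a 1-periodic C² solution of u'' + u g(u) + u' h(x,u,u') = 0 such that u' is not identically zero and u·u' does not vanish identically. Then a contradiction follows: no such periodic solution exists. (Equivalently: every 1-periodic C² solution of this equation with ∮ u'² h(x,u,u') dx > 0 cannot exist, since the periodic integral of the derivative of H(u,u') is 0 while the equation forces it to be negative.) -/
open Topology Filter


/-- Nonexistence of nontrivial periodic stationary solutions: if `h > 0` wherever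
`u·u' ≠ 0`, then no 1-periodic `C²` solution of `u'' + u g(u) + u' h(x,u,u') = 0`
can have `u·u'` not identically zero. -/
theorem stmt_12 (g : ℝ → ℝ) (h : ℝ → ℝ → ℝ → ℝ) (u : ℝ → ℝ)
    (hg : Continuous g) (hh : Continuous fun p : ℝ × ℝ × ℝ => h p.1 p.2.1 p.2.2)
    (hpos : ∀ x v p : ℝ, v * p ≠ 0 → 0 < h x v p)
    (hu : ContDiff ℝ 2 u) (hper : Function.Periodic u 1)
    (hode : ∀ x : ℝ,
      deriv (deriv u) x + u x * g (u x) + deriv u x * h x (u x) (deriv u x) = 0)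
    (hnontriv : ∃ x : ℝ, u x * deriv u x ≠ 0) :
    False := by
  obtain ⟨x₀, hx₀⟩ := hnontriv
  -- basic regularity facts
  have hud : Differentiable ℝ u := hu.differentiable (by norm_num)
  have hu' : ContDiff ℝ 1 (deriv u) := by
    have := (contDiff_succ_iff_deriv (n := 1)).1 (by exact_mod_cast hu)
    exact this.2.2
  have hu'd : Differentiable ℝ (deriv u) := hu'.differentiable one_ne_zero
  have hu'c : Continuous (deriv u) := hu'd.continuous
  have huc : Continuous u := hud.continuous
  -- the integrand
  set f : ℝ → ℝ := fun x => (deriv u x)^2 * h x (u x) (deriv u x) with hf_def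
  have hfc : Continuous f := by
    have : Continuous fun x => h x (u x) (deriv u x) :=
      hh.comp (continuous_id.prodMk (huc.prodMk hu'c))
    exact ((hu'c.pow 2).mul this)
  -- the energy
  set E : ℝ → ℝ := fun x => (deriv u x)^2 / 2 + ∫ t in (0:ℝ)..(u x), t * g t with hE_def
  have hEderiv : ∀ x, HasDerivAt E (-(f x)) x := by
    intro x
    have hE1 : HasDerivAt (fun x => (deriv u x)^2 / 2)
        (deriv u x * deriv (deriv u) x) x := by
      have := ((hu'd x).hasDerivAt.pow 2).div_const 2
      refine this.congr_deriv ?_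
      ring
    have hint : HasDerivAt (fun v => ∫ t in (0:ℝ)..v, t * g t) (u x * g (u x)) (u x) := by
      have hc : Continuous fun t => t * g t := continuous_id.mul hg
      exact intervalIntegral.integral_hasDerivAt_right
        (hc.intervalIntegrable _ _)
        hc.aestronglyMeasurable.stronglyMeasurableAtFilter hc.continuousAt
    have hE2 : HasDerivAt (fun x => ∫ t in (0:ℝ)..(u x), t * g t)
        (u x * g (u x) * deriv u x) x := hint.comp x (hud x).hasDerivAt
    have := hE1.add hE2
    refine this.congr_deriv ?_
    have hode' := hode x
    have : deriv (deriv u) x = -(u x * g (u x)) - deriv u x * h x (u x) (deriv u x) := by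
      linarith
    rw [hf_def]
    simp only [this]
    ring
  -- E is 1-periodic
  have hper' : Function.Periodic (deriv u) 1 := by
    intro x
    have : (fun y => u (y + 1)) = u := funext fun y => hper y
    calc deriv u (x + 1) = deriv (fun y => u (y + 1)) x := (deriv_comp_add_const ..).symm
      _ = deriv u x := by rw [this]
  have hEper : E (x₀ + 1) = E x₀ := by
    simp only [hE_def, hper x₀, hper' x₀]
  -- FTC: the integral of f over one period is zero
  have hint0 : ∫ x in x₀..(x₀ + 1), f x = 0 := by
    have := intervalIntegral.integral_eq_sub_of_hasDerivAt
      (f := E) (f' := fun x => -(f x)) (a := x₀) (b := x₀ + 1)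
      (fun x _ => hEderiv x) ((hfc.neg).intervalIntegrable _ _)
    rw [hEper, sub_self] at this
    have h2 : ∫ x in x₀..(x₀ + 1), f x = -∫ x in x₀..(x₀ + 1), -(f x) := by
      rw [intervalIntegral.integral_neg, neg_neg]
    rw [h2, this, neg_zero]
  -- f is nonnegative everywhere
  have hfnn : ∀ x, 0 ≤ f x := by
    intro x
    by_cases hd : deriv u x = 0
    · simp [hf_def, hd]
    by_cases hu0 : u x = 0
    · -- u x = 0, deriv u x ≠ 0 : argue by continuity from nearby points
      have hslope : Filter.Tendsto (slope u x) (𝓝[≠] x) (𝓝 (deriv u x)) :=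
        hasDerivAt_iff_tendsto_slope.1 (hud x).hasDerivAt
      have hne : ∀ᶠ y in 𝓝[≠] x, slope u x y ≠ 0 := hslope.eventually_ne hd
      have hune : ∀ᶠ y in 𝓝[≠] x, u y ≠ 0 := by
        filter_upwards [hne] with y hy
        intro h0
        apply hy
        simp [slope_def_field, h0, hu0]
      have hdne : ∀ᶠ y in 𝓝[≠] x, deriv u y ≠ 0 :=
        ((hu'c.continuousAt.eventually_ne hd)).filter_mono nhdsWithin_le_nhds
      have hfev : ∀ᶠ y in 𝓝[≠] x, 0 ≤ f y := by
        filter_upwards [hune, hdne] with y h1 h2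
        have := hpos y (u y) (deriv u y) (mul_ne_zero h1 h2)
        have hsq : 0 < (deriv u y)^2 := by positivity
        exact le_of_lt (by simpa [hf_def] using mul_pos hsq this)
      have htend : Filter.Tendsto f (𝓝[≠] x) (𝓝 (f x)) :=
        (hfc.continuousAt).continuousWithinAt
      exact ge_of_tendsto htend hfev
    · have := hpos x (u x) (deriv u x) (mul_ne_zero hu0 hd)
      have hsq : 0 < (deriv u x)^2 := by positivity
      exact le_of_lt (by simpa [hf_def] using mul_pos hsq this)
  -- f x₀ > 0
  have hfx₀ : 0 < f x₀ := by
    have := hpos x₀ (u x₀) (deriv u x₀) hx₀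
    have hd : deriv u x₀ ≠ 0 := fun h0 => hx₀ (by simp [h0])
    have hsq : 0 < (deriv u x₀)^2 := by positivity
    simpa [hf_def] using mul_pos hsq this
  -- find δ such that f ≥ f x₀ / 2 on [x₀, x₀ + δ]
  have hev : ∀ᶠ y in 𝓝 x₀, f x₀ / 2 < f y :=
    (hfc.continuousAt).eventually (eventually_gt_nhds (by linarith))
  obtain ⟨ε, hε, hball⟩ := Metric.eventually_nhds_iff.1 hev
  set δ : ℝ := min (ε / 2) 1 with hδ_def
  have hδpos : 0 < δ := lt_min (by linarith) one_pos
  have hδ1 : δ ≤ 1 := min_le_right _ _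
  have hlow : ∀ y ∈ Set.Icc x₀ (x₀ + δ), f x₀ / 2 ≤ f y := by
    intro y hy
    have : dist y x₀ < ε := by
      rw [Real.dist_eq, abs_lt]
      constructor
      · linarith [hy.1]
      · have : δ ≤ ε / 2 := min_le_left _ _
        linarith [hy.2]
    exact le_of_lt (hball this)
  -- split the integral and get a contradiction
  have hsplit : ∫ x in x₀..(x₀ + 1), f x
      = (∫ x in x₀..(x₀ + δ), f x) + ∫ x in (x₀ + δ)..(x₀ + 1), f x := by
    rw [intervalIntegral.integral_add_adjacent_intervals
      ((hfc.intervalIntegrable _ _)) ((hfc.intervalIntegrable _ _))]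
  have h1 : δ * (f x₀ / 2) ≤ ∫ x in x₀..(x₀ + δ), f x := by
    have hm := intervalIntegral.integral_mono_on (a := x₀) (b := x₀ + δ)
      (f := fun _ => f x₀ / 2) (g := f) (by linarith)
      (intervalIntegrable_const (μ := MeasureTheory.volume)) (hfc.intervalIntegrable _ _) hlow
    rw [intervalIntegral.integral_const] at hm
    simp only [add_sub_cancel_left, smul_eq_mul] at hm
    linarith
  have h2 : (0:ℝ) ≤ ∫ x in (x₀ + δ)..(x₀ + 1), f x :=
    intervalIntegral.integral_nonneg (by linarith) (fun y _ => hfnn y)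
  have : 0 < ∫ x in x₀..(x₀ + 1), f x := by
    rw [hsplit]
    have : 0 < δ * (f x₀ / 2) := mul_pos hδpos (by linarith)
    linarith
  rw [hint0] at this
  exact lt_irrefl 0 this
end

section
/- For ε = (π(m+1))⁻¹ with m a positive integer, the equation ε²u'' + u - u³ = 0 admits a non-constant periodic solution v with minimal period T = 2/m; hence v₁ := v and v₂(x) := v(x - 1/m) are two solutions on [0,1] whose graphs intersect exactly m times (counting intersections over one period of the interval [0,1] with x identified mod 1). -/
open Set MeasureTheory intervalIntegral Real Function


/-- Local version of `hasDerivAt_of_hasDerivAt_of_ne`. -/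
lemma hasDerivAt_of_ne_ball {f g : ℝ → ℝ} {x r : ℝ} (hr : 0 < r)
    (hd : ∀ y, y ≠ x → |y - x| < r → HasDerivAt f (g y) y)
    (hfc : ContinuousAt f x) (hgc : ContinuousAt g x) :
    HasDerivAt f (g x) x := by
  rw [hasDerivAt_iff_tendsto_slope, Metric.tendsto_nhdsWithin_nhds]
  intro δ hδ
  obtain ⟨η₀, hη₀, hgη⟩ := Metric.continuousAt_iff.1 hgc δ hδ
  refine ⟨min η₀ r, lt_min hη₀ hr, ?_⟩
  intro y hy hyx
  have hyr : |y - x| < r := lt_of_lt_of_le (by simpa [Real.dist_eq] using hyx) (min_le_right _ _)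
  have hyη : |y - x| < η₀ := lt_of_lt_of_le (by simpa [Real.dist_eq] using hyx) (min_le_left _ _)
  have hyne : y ≠ x := hy
  -- continuity of f on the closed interval between x and y
  have hcont : ∀ u v : ℝ, u = x ∨ v = x → |u - x| < r → |v - x| < r →
      ContinuousOn f (Icc u v) := by
    intro u v huv hu hv z hz
    rcases eq_or_ne z x with rfl | hzx
    · exact hfc.continuousWithinAt
    · have hzr : |z - x| < r := by
        rcases huv with rfl | rfl
        · rcases abs_sub_lt_iff.1 hv with ⟨h1, h2⟩
          rw [abs_sub_lt_iff]; constructor <;> nlinarith [hz.1, hz.2]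
        · rcases abs_sub_lt_iff.1 hu with ⟨h1, h2⟩
          rw [abs_sub_lt_iff]; constructor <;> nlinarith [hz.1, hz.2]
      exact ((hd z hzx hzr).continuousAt).continuousWithinAt
  rcases lt_or_gt_of_ne hyne with hlt | hlt
  · -- y < x
    obtain ⟨c, hc, hceq⟩ := exists_hasDerivAt_eq_slope f g hlt
      (hcont y x (Or.inr rfl) hyr (by simpa using hr))
      (fun z hz => hd z (ne_of_lt hz.2) (by
        rw [abs_sub_lt_iff]; rcases abs_sub_lt_iff.1 hyr with ⟨h1, h2⟩
        constructor <;> nlinarith [hz.1, hz.2]))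
    have hslope : slope f x y = g c := by
      rw [slope_comm, slope_def_field, hceq]
    rw [hslope]
    apply hgη
    rw [Real.dist_eq]
    rw [abs_sub_lt_iff]
    rcases abs_sub_lt_iff.1 hyη with ⟨h1, h2⟩
    constructor <;> nlinarith [hc.1, hc.2]
  · -- x < y
    obtain ⟨c, hc, hceq⟩ := exists_hasDerivAt_eq_slope f g hlt
      (hcont x y (Or.inl rfl) (by simpa using hr) hyr)
      (fun z hz => hd z (ne_of_gt hz.1) (by
        rw [abs_sub_lt_iff]; rcases abs_sub_lt_iff.1 hyr with ⟨h1, h2⟩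
        constructor <;> nlinarith [hz.1, hz.2]))
    have hslope : slope f x y = g c := by
      rw [slope_def_field, hceq]
    rw [hslope]
    apply hgη
    rw [Real.dist_eq, abs_sub_lt_iff]
    rcases abs_sub_lt_iff.1 hyη with ⟨h1, h2⟩
    constructor <;> nlinarith [hc.1, hc.2]



set_option maxHeartbeats 1000000 in
lemma glue (ε a L : ℝ) (hε : 0 < ε) (ha0 : 0 < a) (hL : 0 < L)
    (g : ℝ → ℝ) (hg_even : ∀ t, g (-t) = g t) (hg_pos : ∀ t, |t| < a → 0 < g t)
    (hga : g a = 0)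
    (hg_deriv : ∀ u : ℝ, HasDerivAt g ((2*u^3 - 2*u)/ε^2) u)
    (v0 : ℝ → ℝ) (v0_cont : Continuous v0) (v0_mem : ∀ y, v0 y ∈ Icc (-a) a)
    (v0_zero : v0 0 = 0) (v0_L : v0 L = a)
    (v0_inj : InjOn v0 (Icc (-L) L))
    (v0_odd : ∀ y ∈ Icc (-L) L, v0 (-y) = -v0 y)
    (v0_Ioo : ∀ y ∈ Ioo (-L) L, v0 y ∈ Ioo (-a) a)
    (v0_deriv : ∀ y ∈ Ioo (-L) L, HasDerivAt v0 (Real.sqrt (g (v0 y))) y) :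
    ∃ V : ℝ → ℝ, ContDiff ℝ 2 V ∧ (∀ x, ε^2 * deriv (deriv V) x + V x - (V x)^3 = 0) ∧
      V 0 = 0 ∧ V L = a ∧ (∀ x, V (x + 2*L) = -V x) ∧
      (∀ x, V x = 0 ↔ ∃ k : ℤ, x = 2*L*(k:ℝ)) ∧
      (∀ x, V x = a ↔ ∃ k : ℤ, x = L + 4*L*(k:ℝ)) := by
  have hπ := Real.pi_pos
  set ω : ℝ := π / (2*L) with hωdef
  have hω : 0 < ω := by positivity
  have hωL : ω * L = π / 2 := by rw [hωdef]; field_simp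
  set τ : ℝ → ℝ := fun x => (2*L/π) * Real.arcsin (Real.sin (ω * x)) with hτdef
  have τ_cont : Continuous τ :=
    continuous_const.mul (Real.continuous_arcsin.comp (Real.continuous_sin.comp (by continuity)))
  have τ_mem : ∀ x, τ x ∈ Icc (-L) L := by
    intro x
    have h1 := Real.neg_pi_div_two_le_arcsin (Real.sin (ω * x))
    have h2 := Real.arcsin_le_pi_div_two (Real.sin (ω * x))
    have key : (2*L/π) * (π/2) = L := by field_simp; try ring
    have key' : (2*L/π) * (-(π/2)) = -L := by field_simp; try ring
    constructor
    · rw [hτdef]; dsimp only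
      calc -L = (2*L/π) * (-(π/2)) := key'.symm
        _ ≤ (2*L/π) * Real.arcsin (Real.sin (ω * x)) :=
            mul_le_mul_of_nonneg_left h1 (by positivity)
    · rw [hτdef]; dsimp only
      calc (2*L/π) * Real.arcsin (Real.sin (ω * x)) ≤ (2*L/π) * (π/2) :=
            mul_le_mul_of_nonneg_left h2 (by positivity)
        _ = L := key
  have τ_eq : ∀ x ∈ Icc (-L) L, τ x = x := by
    intro x hx
    have hb1 : -(π/2) ≤ ω * x := by
      rw [show -(π/2) = ω * (-L) by rw [mul_neg, hωL]]
      exact mul_le_mul_of_nonneg_left hx.1 hω.le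
    have hb2 : ω * x ≤ π/2 := by
      rw [← hωL]; exact mul_le_mul_of_nonneg_left hx.2 hω.le
    rw [hτdef]; dsimp only
    rw [Real.arcsin_sin hb1 hb2, hωdef]
    field_simp
  have τ_anti : ∀ x, τ (x + 2*L) = -τ x := by
    intro x
    have : ω * (x + 2*L) = ω * x + π := by
      rw [mul_add, hωdef]; field_simp
    rw [hτdef]; dsimp only
    rw [this, Real.sin_add_pi, Real.arcsin_neg]
    ring
  have τ_per : Function.Periodic τ (4*L) := by
    intro x
    have : x + 4*L = (x + 2*L) + 2*L := by ring
    rw [this, τ_anti, τ_anti, neg_neg]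
  have τ_shift : ∀ (k : ℤ) (x : ℝ), τ (x + 4*L*k) = τ x := by
    intro k x
    have := (τ_per.int_mul k) x
    simpa [mul_comm, mul_assoc, mul_left_comm] using this
  set V : ℝ → ℝ := v0 ∘ τ with hVdef
  have V_cont : Continuous V := v0_cont.comp τ_cont
  have V_anti : ∀ x, V (x + 2*L) = -V x := by
    intro x
    show v0 (τ (x + 2*L)) = -v0 (τ x)
    rw [τ_anti]
    exact v0_odd _ (τ_mem x)
  -- trig characterizations
  have sin_one_iff : ∀ x : ℝ, Real.sin (ω*x) = 1 ↔ ∃ k : ℤ, x = L + 4*L*(k:ℝ) := by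
    intro x
    rw [Real.sin_eq_one_iff]
    constructor
    · rintro ⟨k, hk⟩
      refine ⟨k, ?_⟩
      have : ω * (L + 4*L*(k:ℝ)) = π/2 + k * (2*π) := by
        rw [hωdef]; field_simp; try ring
      have hx : ω * x = ω * (L + 4*L*(k:ℝ)) := by rw [this]; exact hk.symm
      exact mul_left_cancel₀ hω.ne' hx
    · rintro ⟨k, rfl⟩
      exact ⟨k, by rw [hωdef]; field_simp; try ring⟩
  have sin_zero_iff : ∀ x : ℝ, Real.sin (ω*x) = 0 ↔ ∃ k : ℤ, x = 2*L*(k:ℝ) := by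
    intro x
    rw [Real.sin_eq_zero_iff]
    constructor
    · rintro ⟨k, hk⟩
      refine ⟨k, ?_⟩
      have : ω * (2*L*(k:ℝ)) = k * π := by rw [hωdef]; field_simp; try ring
      have hx : ω * x = ω * (2*L*(k:ℝ)) := by rw [this]; exact hk.symm
      exact mul_left_cancel₀ hω.ne' hx
    · rintro ⟨k, rfl⟩
      exact ⟨k, by rw [hωdef]; field_simp; try ring⟩
  have cos_zero_iff : ∀ x : ℝ, Real.cos (ω*x) = 0 ↔ ∃ k : ℤ, x = L + 2*L*(k:ℝ) := by
    intro x
    rw [Real.cos_eq_zero_iff]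
    constructor
    · rintro ⟨k, hk⟩
      refine ⟨k, ?_⟩
      have : ω * (L + 2*L*(k:ℝ)) = (2*k+1) * π/2 := by rw [hωdef]; field_simp; try ring
      have hx : ω * x = ω * (L + 2*L*(k:ℝ)) := by rw [this]; exact hk
      exact mul_left_cancel₀ hω.ne' hx
    · rintro ⟨k, rfl⟩
      exact ⟨k, by rw [hωdef]; field_simp; try ring⟩
  -- value of τ at special points
  have τ_L_iff : ∀ x, τ x = L ↔ Real.sin (ω*x) = 1 := by
    intro x
    constructor
    · intro h
      have harc : Real.arcsin (Real.sin (ω*x)) = π/2 := by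
        have hπne : (π:ℝ) ≠ 0 := hπ.ne'
        have : (2*L/π) * Real.arcsin (Real.sin (ω * x)) = (2*L/π) * (π/2) := by
          rw [show (2*L/π) * (π/2) = L by field_simp; try ring]
          exact h
        have h2L : (2*L/π) ≠ 0 := by positivity
        exact mul_left_cancel₀ h2L this
      have := congrArg Real.sin harc
      rwa [Real.sin_arcsin (by linarith [Real.neg_one_le_sin (ω*x)])
        (Real.sin_le_one (ω*x)), Real.sin_pi_div_two] at this
    · intro h
      rw [hτdef]; dsimp only
      rw [h, Real.arcsin_one]
      field_simp; try ring
  have τ_zero_iff : ∀ x, τ x = 0 ↔ Real.sin (ω*x) = 0 := by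
    intro x
    constructor
    · intro h
      have h2L : (2*L/π) ≠ 0 := by positivity
      have harc : Real.arcsin (Real.sin (ω*x)) = 0 := by
        have : (2*L/π) * Real.arcsin (Real.sin (ω * x)) = 0 := h
        exact (mul_eq_zero.1 this).resolve_left h2L
      exact Real.arcsin_eq_zero_iff.1 harc
    · intro h
      rw [hτdef]; dsimp only
      rw [h, Real.arcsin_zero, mul_zero]
  have τ_negL_iff : ∀ x, τ x = -L ↔ Real.sin (ω*x) = -1 := by
    intro x
    constructor
    · intro h
      have harc : Real.arcsin (Real.sin (ω*x)) = -(π/2) := by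
        have hπne : (π:ℝ) ≠ 0 := hπ.ne'
        have : (2*L/π) * Real.arcsin (Real.sin (ω * x)) = (2*L/π) * (-(π/2)) := by
          rw [show (2*L/π) * (-(π/2)) = -L by field_simp; try ring]
          exact h
        have h2L : (2*L/π) ≠ 0 := by positivity
        exact mul_left_cancel₀ h2L this
      have := congrArg Real.sin harc
      rwa [Real.sin_arcsin (by linarith [Real.neg_one_le_sin (ω*x)])
        (Real.sin_le_one (ω*x)), Real.sin_neg, Real.sin_pi_div_two] at this
    · intro h
      rw [hτdef]; dsimp only
      rw [h, show ((-1:ℝ)) = -(1:ℝ) by norm_num, Real.arcsin_neg, Real.arcsin_one]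
      field_simp; try ring
  -- the sign/derivative functions
  set W : ℝ → ℝ := fun x => Real.sign (Real.cos (ω*x)) * Real.sqrt (g (V x)) with hWdef
  set U : ℝ → ℝ := fun x => ((V x)^3 - V x)/ε^2 with hUdef
  have U_cont : Continuous U := (((V_cont.pow 3).sub V_cont).div_const _)
  -- charts
  have chartA : ∀ (j : ℤ) (x : ℝ), |x - 4*L*(j:ℝ)| < L →
      HasDerivAt V (Real.sqrt (g (V x))) x ∧ 0 < Real.cos (ω*x) := by
    intro j x hx
    have hVloc : ∀ y, |y - 4*L*(j:ℝ)| ≤ L → V y = v0 (y - 4*L*(j:ℝ)) := by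
      intro y hy
      show v0 (τ y) = _
      have : τ y = τ (y - 4*L*(j:ℝ)) := by
        rw [← τ_shift j (y - 4*L*(j:ℝ))]; ring_nf
      rw [this, τ_eq _ (abs_le.1 hy |>.imp (by intro h; linarith) (by intro h; linarith))]
    have hu : x - 4*L*(j:ℝ) ∈ Ioo (-L) L := by
      rcases abs_lt.1 hx with ⟨h1, h2⟩; exact ⟨by linarith, by linarith⟩
    have inner : HasDerivAt (fun y : ℝ => y - 4*L*(j:ℝ)) 1 x := (hasDerivAt_id x).sub_const _
    have hcomp : HasDerivAt (fun y => v0 (y - 4*L*(j:ℝ)))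
        (Real.sqrt (g (v0 (x - 4*L*(j:ℝ)))) * 1) x := (v0_deriv _ hu).comp x inner
    have hball : {y : ℝ | |y - 4*L*(j:ℝ)| < L} ∈ nhds x := by
      have : IsOpen {y : ℝ | |y - 4*L*(j:ℝ)| < L} := by
        have : {y : ℝ | |y - 4*L*(j:ℝ)| < L} = Metric.ball (4*L*(j:ℝ)) L := by
          ext y; simp [Metric.mem_ball, Real.dist_eq]
        rw [this]; exact Metric.isOpen_ball
      exact this.mem_nhds hx
    have hev : V =ᶠ[nhds x] fun y => v0 (y - 4*L*(j:ℝ)) :=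
      Filter.eventually_of_mem hball (fun y hy => hVloc y (le_of_lt hy))
    have hd : HasDerivAt V (Real.sqrt (g (V x))) x := by
      have := hcomp.congr_of_eventuallyEq hev
      rw [mul_one] at this
      rwa [hVloc x hx.le]
    refine ⟨hd, ?_⟩
    have hcos : Real.cos (ω*x) = Real.cos (ω*(x - 4*L*(j:ℝ))) := by
      have : ω*x = ω*(x - 4*L*(j:ℝ)) + (j:ℤ) * (2*π) := by
        rw [hωdef]; field_simp; ring
      rw [this, Real.cos_add_int_mul_two_pi]
    rw [hcos]
    apply Real.cos_pos_of_mem_Ioo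
    constructor
    · rcases abs_lt.1 hx with ⟨h1, h2⟩
      have hlt : -(L) < x - 4*L*(j:ℝ) := by linarith
      calc -(π/2) = ω * (-L) := by rw [mul_neg, hωL]
        _ < ω * (x - 4*L*(j:ℝ)) := mul_lt_mul_of_pos_left hlt hω
    · rcases abs_lt.1 hx with ⟨h1, h2⟩
      calc ω * (x - 4*L*(j:ℝ)) < ω * L := mul_lt_mul_of_pos_left (by linarith) hω
        _ = π/2 := hωL
  have chartB : ∀ (j : ℤ) (x : ℝ), |x - (4*L*(j:ℝ) + 2*L)| < L →
      HasDerivAt V (-Real.sqrt (g (V x))) x ∧ Real.cos (ω*x) < 0 := by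
    intro j x hx
    set c : ℝ := 4*L*(j:ℝ) + 2*L with hcdef
    have hVloc : ∀ y, |y - c| ≤ L → V y = -v0 (y - c) := by
      intro y hy
      have hmem : y - c ∈ Icc (-L) L := abs_le.1 hy |>.imp (by intro h; linarith) (by intro h; linarith)
      show v0 (τ y) = _
      have h1 : τ y = τ ((y - c) + 2*L) := by
        rw [← τ_shift j ((y - c) + 2*L), hcdef]; ring_nf
      rw [h1, τ_anti, τ_eq _ hmem]
      exact v0_odd _ hmem
    have hu : -(x - c) ∈ Ioo (-L) L := by
      rcases abs_lt.1 hx with ⟨h1, h2⟩; constructor <;> simp <;> linarith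
    have inner : HasDerivAt (fun y : ℝ => -(y - c)) (-1) x := by
      exact ((hasDerivAt_id x).sub_const c).neg
    have hcomp : HasDerivAt (fun y => v0 (-(y - c)))
        (Real.sqrt (g (v0 (-(x - c)))) * (-1)) x := (v0_deriv _ hu).comp x inner
    have hball : {y : ℝ | |y - c| < L} ∈ nhds x := by
      have hopen : IsOpen {y : ℝ | |y - c| < L} := by
        have : {y : ℝ | |y - c| < L} = Metric.ball c L := by
          ext y; simp [Metric.mem_ball, Real.dist_eq]
        rw [this]; exact Metric.isOpen_ball
      exact hopen.mem_nhds hx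
    have hmemx : x - c ∈ Icc (-L) L := by
      rcases abs_lt.1 hx with ⟨h1, h2⟩
      exact ⟨by linarith, by linarith⟩
    have hev : V =ᶠ[nhds x] fun y => v0 (-(y - c)) := by
      apply Filter.eventually_of_mem hball
      intro y hy
      have hy' : |y - c| < L := hy
      have hmem : y - c ∈ Icc (-L) L := by
        rcases abs_lt.1 hy' with ⟨h1, h2⟩
        exact ⟨by linarith, by linarith⟩
      rw [hVloc y (le_of_lt hy), ← v0_odd _ hmem]
    have hVx : V x = v0 (-(x - c)) := by rw [hVloc x hx.le, ← v0_odd _ hmemx]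
    have hd : HasDerivAt V (-Real.sqrt (g (V x))) x := by
      have := hcomp.congr_of_eventuallyEq hev
      rw [hVx]
      simpa [mul_neg_one] using this
    refine ⟨hd, ?_⟩
    have hcos : Real.cos (ω*x) = -Real.cos (ω*(x - c)) := by
      have harg : ω*x = (ω*(x - c) + π) + (j:ℤ) * (2*π) := by
        rw [hωdef, hcdef]; field_simp; ring
      rw [harg, Real.cos_add_int_mul_two_pi, Real.cos_add_pi]
    rw [hcos, neg_lt, neg_zero]
    apply Real.cos_pos_of_mem_Ioo
    rcases abs_lt.1 hx with ⟨h1, h2⟩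
    constructor
    · calc -(π/2) = ω * (-L) := by rw [mul_neg, hωL]
        _ < ω * (x - c) := mul_lt_mul_of_pos_left (by linarith) hω
    · calc ω * (x - c) < ω * L := mul_lt_mul_of_pos_left (by linarith) hω
        _ = π/2 := hωL
  have g_cont : Continuous g :=
    continuous_iff_continuousAt.mpr (fun u => (hg_deriv u).continuousAt)
  have h2L : (0:ℝ) < 2*L := by linarith
  -- derivative of V at non-peak points
  have nonpeak : ∀ x : ℝ, Real.cos (ω*x) ≠ 0 → HasDerivAt V (W x) x := by
    intro x hcos
    set k : ℤ := round (x / (2*L)) with hkdef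
    have hk : |x - 2*L*(k:ℝ)| ≤ L := by
      have h1 : |x/(2*L) - (k:ℝ)| ≤ 1/2 := abs_sub_round (x/(2*L))
      have heq : x - 2*L*(k:ℝ) = (2*L) * (x/(2*L) - (k:ℝ)) := by field_simp
      rw [heq, abs_mul, abs_of_pos h2L]
      calc 2*L*|x/(2*L) - (k:ℝ)| ≤ 2*L*(1/2) := mul_le_mul_of_nonneg_left h1 h2L.le
        _ = L := by ring
    have hklt : |x - 2*L*(k:ℝ)| < L := by
      rcases hk.lt_or_eq with hlt | heq
      · exact hlt
      · exfalso
        rcases (abs_eq hL.le).1 heq with h | h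
        · exact hcos ((cos_zero_iff x).2 ⟨k, by linarith⟩)
        · exact hcos ((cos_zero_iff x).2 ⟨k - 1, by push_cast; linarith⟩)
    rcases Int.even_or_odd k with ⟨j, hj⟩ | ⟨j, hj⟩
    · have h4 : 2*L*(k:ℝ) = 4*L*(j:ℝ) := by rw [hj]; push_cast; ring
      obtain ⟨hd, hcp⟩ := chartA j x (by rwa [← h4])
      have hWx : W x = Real.sqrt (g (V x)) := by
        rw [hWdef]; dsimp only; rw [Real.sign_of_pos hcp, one_mul]
      rwa [hWx]
    · have h4 : 2*L*(k:ℝ) = 4*L*(j:ℝ) + 2*L := by rw [hj]; push_cast; ring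
      obtain ⟨hd, hcn⟩ := chartB j x (by rwa [← h4])
      have hWx : W x = -Real.sqrt (g (V x)) := by
        rw [hWdef]; dsimp only; rw [Real.sign_of_neg hcn]; ring
      rwa [hWx]
  have hsqV_cont : Continuous fun y => Real.sqrt (g (V y)) :=
    Real.continuous_sqrt.comp (g_cont.comp V_cont)
  have hccos : Continuous fun y : ℝ => Real.cos (ω*y) :=
    Real.continuous_cos.comp (continuous_const.mul continuous_id)
  have peakVal : ∀ x : ℝ, Real.cos (ω*x) = 0 → Real.sqrt (g (V x)) = 0 := by
    intro x hc
    have hsq : Real.sin (ω*x)^2 = 1 := by nlinarith [Real.sin_sq_add_cos_sq (ω*x)]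
    have : (Real.sin (ω*x) - 1) * (Real.sin (ω*x) + 1) = 0 := by nlinarith
    rcases mul_eq_zero.1 this with h | h
    · have hsin1 : Real.sin (ω*x) = 1 := by linarith
      have hτ : τ x = L := (τ_L_iff x).2 hsin1
      have : V x = a := by show v0 (τ x) = a; rw [hτ, v0_L]
      rw [this, hga, Real.sqrt_zero]
    · have hsin1 : Real.sin (ω*x) = -1 := by linarith
      have hτ : τ x = -L := (τ_negL_iff x).2 hsin1
      have : V x = -a := by
        show v0 (τ x) = -a
        rw [hτ, v0_odd L ⟨by linarith, le_refl L⟩, v0_L]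
      rw [this, hg_even, hga, Real.sqrt_zero]
  have W_cont : Continuous W := by
    rw [continuous_iff_continuousAt]; intro x
    by_cases hc : Real.cos (ω*x) = 0
    · have hWx : W x = 0 := by
        rw [hWdef]; dsimp only; rw [peakVal x hc, mul_zero]
      have hb : ∀ y, ‖W y‖ ≤ Real.sqrt (g (V y)) := by
        intro y
        rw [hWdef]; dsimp only; rw [norm_mul]
        have h1 : ‖Real.sign (Real.cos (ω*y))‖ ≤ 1 := by
          rcases lt_trichotomy (Real.cos (ω*y)) 0 with h|h|h
          · rw [Real.sign_of_neg h]; norm_num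
          · rw [h, Real.sign_zero]; norm_num
          · rw [Real.sign_of_pos h]; norm_num
        have h2 : ‖Real.sqrt (g (V y))‖ = Real.sqrt (g (V y)) :=
          abs_of_nonneg (Real.sqrt_nonneg _)
        calc ‖Real.sign (Real.cos (ω*y))‖ * ‖Real.sqrt (g (V y))‖
            ≤ 1 * ‖Real.sqrt (g (V y))‖ := mul_le_mul_of_nonneg_right h1 (norm_nonneg _)
          _ = Real.sqrt (g (V y)) := by rw [one_mul, h2]
      have htend : Filter.Tendsto (fun y => Real.sqrt (g (V y))) (nhds x) (nhds 0) := by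
        have := hsqV_cont.continuousAt (x := x)
        rwa [ContinuousAt, peakVal x hc] at this
      unfold ContinuousAt
      rw [hWx]
      exact squeeze_zero_norm hb htend
    · rcases lt_or_gt_of_ne hc with hneg | hpos
      · have hev : W =ᶠ[nhds x] fun y => -Real.sqrt (g (V y)) := by
          apply Filter.eventually_of_mem ((isOpen_lt hccos continuous_const).mem_nhds hneg)
          intro y hy
          rw [hWdef]; dsimp only; rw [Real.sign_of_neg hy]; ring
        exact (hsqV_cont.neg.continuousAt).congr hev.symm
      · have hev : W =ᶠ[nhds x] fun y => Real.sqrt (g (V y)) := by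
          apply Filter.eventually_of_mem ((isOpen_lt continuous_const hccos).mem_nhds hpos)
          intro y hy
          rw [hWdef]; dsimp only; rw [Real.sign_of_pos hy, one_mul]
        exact (hsqV_cont.continuousAt).congr hev.symm
  have peak_sep : ∀ (k : ℤ) (y : ℝ), y ≠ L + 2*L*(k:ℝ) → |y - (L + 2*L*(k:ℝ))| < 2*L →
      Real.cos (ω*y) ≠ 0 := by
    intro k y hyne hyd hcy
    obtain ⟨k', hk'⟩ := (cos_zero_iff y).1 hcy
    apply hyne
    rw [hk'] at hyd ⊢
    have h1 : |2*L*((k':ℝ) - (k:ℝ))| < 2*L := by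
      have : L + 2*L*(k':ℝ) - (L + 2*L*(k:ℝ)) = 2*L*((k':ℝ) - (k:ℝ)) := by ring
      rwa [this] at hyd
    rw [abs_mul, abs_of_pos h2L] at h1
    have h2 : |(k':ℝ) - (k:ℝ)| < 1 := by
      by_contra hcon
      push_neg at hcon
      nlinarith
    have h3 : |((k' - k : ℤ) : ℝ)| < 1 := by push_cast; exact h2
    have h4 : k' = k := by
      have := abs_lt.1 h3
      have hlt : (-1 : ℝ) < ((k' - k : ℤ) : ℝ) ∧ ((k' - k : ℤ) : ℝ) < 1 := this
      have h5 : (-1 : ℤ) < k' - k := by exact_mod_cast hlt.1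
      have h6 : (k' - k : ℤ) < 1 := by exact_mod_cast hlt.2
      omega
    rw [h4]
  have V_hasDeriv : ∀ x, HasDerivAt V (W x) x := by
    intro x
    by_cases hc : Real.cos (ω*x) = 0
    · obtain ⟨k, rfl⟩ := (cos_zero_iff x).1 hc
      exact hasDerivAt_of_ne_ball h2L
        (fun y hyne hyd => nonpeak y (peak_sep k y hyne hyd))
        V_cont.continuousAt W_cont.continuousAt
    · exact nonpeak x hc
  have nonpeakW : ∀ x : ℝ, Real.cos (ω*x) ≠ 0 → HasDerivAt W (U x) x := by
    intro x hc
    have hτIoo : τ x ∈ Ioo (-L) L := by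
      refine ⟨lt_of_le_of_ne (τ_mem x).1 ?_, lt_of_le_of_ne (τ_mem x).2 ?_⟩
      · intro h
        have hs := (τ_negL_iff x).1 h.symm
        apply hc
        have h1 : Real.sin (ω*x)^2 = 1 := by rw [hs]; norm_num
        have h2 : Real.cos (ω*x)^2 = 0 := by
          have := Real.sin_sq_add_cos_sq (ω*x); linarith
        exact pow_eq_zero_iff (by norm_num) |>.1 h2
      · intro h
        have hs := (τ_L_iff x).1 h
        apply hc
        have h1 : Real.sin (ω*x)^2 = 1 := by rw [hs]; norm_num
        have h2 : Real.cos (ω*x)^2 = 0 := by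
          have := Real.sin_sq_add_cos_sq (ω*x); linarith
        exact pow_eq_zero_iff (by norm_num) |>.1 h2
    have hVIoo : V x ∈ Ioo (-a) a := v0_Ioo _ hτIoo
    have hgpos : 0 < g (V x) := hg_pos _ (abs_lt.2 ⟨hVIoo.1, hVIoo.2⟩)
    have hsne : Real.sqrt (g (V x)) ≠ 0 := (Real.sqrt_pos.2 hgpos).ne'
    have inner1 : HasDerivAt (fun y => g (V y)) ((2*(V x)^3 - 2*(V x))/ε^2 * W x) x :=
      (hg_deriv (V x)).comp x (V_hasDeriv x)
    have outer : HasDerivAt (fun y => Real.sqrt (g (V y)))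
        (1/(2*Real.sqrt (g (V x))) * ((2*(V x)^3 - 2*(V x))/ε^2 * W x)) x :=
      (Real.hasDerivAt_sqrt hgpos.ne').comp x inner1
    rcases lt_or_gt_of_ne hc with hneg | hpos
    · have hev : W =ᶠ[nhds x] fun y => -Real.sqrt (g (V y)) := by
        apply Filter.eventually_of_mem ((isOpen_lt hccos continuous_const).mem_nhds hneg)
        intro y hy
        rw [hWdef]; dsimp only; rw [Real.sign_of_neg hy]; ring
      have hWx : W x = -Real.sqrt (g (V x)) := by
        rw [hWdef]; dsimp only; rw [Real.sign_of_neg hneg]; ring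
      have hd := (outer.neg).congr_of_eventuallyEq hev
      refine hd.congr_deriv ?_; symm
      rw [hUdef]; dsimp only
      rw [hWx]
      field_simp
    · have hev : W =ᶠ[nhds x] fun y => Real.sqrt (g (V y)) := by
        apply Filter.eventually_of_mem ((isOpen_lt continuous_const hccos).mem_nhds hpos)
        intro y hy
        rw [hWdef]; dsimp only; rw [Real.sign_of_pos hy, one_mul]
      have hWx : W x = Real.sqrt (g (V x)) := by
        rw [hWdef]; dsimp only; rw [Real.sign_of_pos hpos, one_mul]
      have hd := outer.congr_of_eventuallyEq hev
      refine hd.congr_deriv ?_; symm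
      rw [hUdef]; dsimp only
      rw [hWx]
      field_simp
  have W_hasDeriv : ∀ x, HasDerivAt W (U x) x := by
    intro x
    by_cases hc : Real.cos (ω*x) = 0
    · obtain ⟨k, rfl⟩ := (cos_zero_iff x).1 hc
      exact hasDerivAt_of_ne_ball h2L
        (fun y hyne hyd => nonpeakW y (peak_sep k y hyne hyd))
        W_cont.continuousAt U_cont.continuousAt
    · exact nonpeakW x hc
  have derivV : deriv V = W := funext fun x => (V_hasDeriv x).deriv
  have derivW : deriv W = U := funext fun x => (W_hasDeriv x).deriv
  have hL0mem : (0:ℝ) ∈ Icc (-L) L := ⟨by linarith, by linarith⟩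
  have hLmem : L ∈ Icc (-L) L := ⟨by linarith, le_refl L⟩
  refine ⟨V, ?_, ?_, ?_, ?_, V_anti, ?_, ?_⟩
  · -- ContDiff ℝ 2 V
    rw [show (2 : WithTop ℕ∞) = 1 + 1 from rfl, contDiff_succ_iff_deriv]
    refine ⟨fun x => (V_hasDeriv x).differentiableAt, by simp, ?_⟩
    rw [derivV, contDiff_one_iff_deriv]
    exact ⟨fun x => (W_hasDeriv x).differentiableAt, by rw [derivW]; exact U_cont⟩
  · intro x
    rw [derivV, derivW, hUdef]
    dsimp only
    field_simp
    ring
  · show v0 (τ 0) = 0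
    rw [τ_eq 0 hL0mem, v0_zero]
  · show v0 (τ L) = a
    rw [τ_eq L hLmem, v0_L]
  · intro x
    constructor
    · intro h
      have hτ0 : τ x = 0 := by
        apply v0_inj (τ_mem x) hL0mem
        rw [v0_zero]
        exact h
      exact (sin_zero_iff x).1 ((τ_zero_iff x).1 hτ0)
    · rintro ⟨k, rfl⟩
      have hτ : τ (2*L*(k:ℝ)) = 0 := (τ_zero_iff _).2 ((sin_zero_iff _).2 ⟨k, rfl⟩)
      show v0 (τ _) = 0
      rw [hτ, v0_zero]
  · intro x
    constructor
    · intro h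
      have hτ : τ x = L := by
        apply v0_inj (τ_mem x) hLmem
        rw [v0_L]
        exact h
      exact (sin_one_iff x).1 ((τ_L_iff x).1 hτ)
    · rintro ⟨k, rfl⟩
      have hτ : τ (L + 4*L*(k:ℝ)) = L := (τ_L_iff _).2 ((sin_one_iff _).2 ⟨k, rfl⟩)
      show v0 (τ _) = a
      rw [hτ, v0_L]


lemma intervalIntegrable_of_bound_inv_sqrt' {f : ℝ → ℝ} {p q C : ℝ} (hpq : p ≤ q)
    (hmeas : Measurable f)
    (hbd : ∀ t ∈ Set.Ioc p q, |f t| ≤ C * (Real.sqrt (q - t))⁻¹) :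
    IntervalIntegrable f volume p q := by
  have hrpow : IntervalIntegrable (fun t : ℝ => C * (q - t) ^ (-(1/2) : ℝ)) volume p q := by
    have h1 : IntervalIntegrable (fun x : ℝ => x ^ (-(1/2) : ℝ)) volume (q - p) (q - q) :=
      intervalIntegrable_rpow' (by norm_num)
    have := (h1.comp_sub_left q).const_mul C
    simpa using this
  apply hrpow.mono_fun (hmeas.aestronglyMeasurable)
  rw [Filter.EventuallyLE, ae_restrict_iff' measurableSet_uIoc]
  apply Filter.Eventually.of_forall
  intro t ht
  rw [Set.uIoc_of_le hpq] at ht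
  have h1 : (Real.sqrt (q - t))⁻¹ = (q - t) ^ (-(1/2) : ℝ) := by
    rw [Real.sqrt_eq_rpow, ← Real.rpow_neg (by linarith [ht.2])]
  calc ‖f t‖ = |f t| := rfl
    _ ≤ C * (Real.sqrt (q - t))⁻¹ := hbd t ht
    _ = C * (q - t) ^ (-(1/2) : ℝ) := by rw [h1]
    _ ≤ ‖C * (q - t) ^ (-(1/2) : ℝ)‖ := le_abs_self _

set_option maxHeartbeats 1000000 in
lemma quad (ε a : ℝ) (hε : 0 < ε) (ha0 : 0 < a) (ha1 : a < 1) :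
    ∃ (v0 : ℝ → ℝ) (L : ℝ),
      L = (∫ t in (0:ℝ)..a, (Real.sqrt ((a^2 - t^2) * (2 - a^2 - t^2) / (2*ε^2)))⁻¹) ∧
      0 < L ∧
      Continuous v0 ∧ (∀ y, v0 y ∈ Icc (-a) a) ∧
      v0 0 = 0 ∧ v0 L = a ∧
      InjOn v0 (Icc (-L) L) ∧
      (∀ y ∈ Icc (-L) L, v0 (-y) = -v0 y) ∧
      (∀ y ∈ Ioo (-L) L, v0 y ∈ Ioo (-a) a) ∧
      (∀ y ∈ Ioo (-L) L, HasDerivAt v0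
        (Real.sqrt ((a^2 - (v0 y)^2) * (2 - a^2 - (v0 y)^2) / (2*ε^2))) y) := by
  set g : ℝ → ℝ := fun t => (a^2 - t^2) * (2 - a^2 - t^2) / (2*ε^2) with hgdef
  have hg_cont : Continuous g := by
    apply Continuous.div_const
    exact (continuous_const.sub (continuous_pow 2)).mul
      ((continuous_const.sub (continuous_pow 2)))
  have ha2 : a^2 < 1 := by nlinarith
  have hg_pos : ∀ t, |t| < a → 0 < g t := by
    intro t ht
    rcases abs_lt.1 ht with ⟨h1, h2⟩
    have ht2 : t^2 < a^2 := by nlinarith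
    apply div_pos _ (by positivity)
    apply mul_pos (by nlinarith) (by nlinarith)
  have hga : g a = 0 := by rw [hgdef]; simp
  set h : ℝ → ℝ := fun t => (Real.sqrt (g t))⁻¹ with hhdef
  have h_meas : Measurable h := (Real.continuous_sqrt.comp hg_cont).measurable.inv
  have h_even : ∀ t, h (-t) = h t := by
    intro t
    rw [hhdef]; dsimp only
    congr 2
    rw [hgdef]; dsimp only; ring
  have h_pos : ∀ t, |t| < a → 0 < h t := by
    intro t ht
    exact inv_pos.2 (Real.sqrt_pos.2 (hg_pos t ht))
  have h_nonneg : ∀ t, 0 ≤ h t := fun t => inv_nonneg.2 (Real.sqrt_nonneg _)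
  have h_contAt : ∀ t, |t| < a → ContinuousAt h t := by
    intro t ht
    exact ((Real.continuous_sqrt.comp hg_cont).continuousAt).inv₀
      (Real.sqrt_pos.2 (hg_pos t ht)).ne'
  have h_contOn : ContinuousOn h (Ioo (-a) a) := by
    intro t ht
    exact (h_contAt t (abs_lt.2 ⟨ht.1, ht.2⟩)).continuousWithinAt
  -- integrability
  set c1 : ℝ := a*(1-a^2)/ε^2 with hc1def
  have hc1 : 0 < c1 := by
    have h1a : (0:ℝ) < 1 - a^2 := by nlinarith
    rw [hc1def]; positivity
  have h_int_right : IntervalIntegrable h volume 0 a := by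
    apply intervalIntegrable_of_bound_inv_sqrt' ha0.le h_meas (C := (Real.sqrt c1)⁻¹)
    intro t ht
    rcases ht.2.lt_or_eq with hta | rfl
    · have hN : (a - t) * c1 ≤ g t := by
        have h1 : 0 < t := ht.1
        have heq : (a - t) * c1 = ((a - t)*(2*a*(1-a^2)))/(2*ε^2) := by
          rw [hc1def]; field_simp
        have key : a * (2 - 2*a^2) ≤ (a + t) * (2 - a^2 - t^2) := by
          apply mul_le_mul (by linarith) (by nlinarith) (by nlinarith) (by linarith)
        have hnum : (a - t)*(2*a*(1-a^2)) ≤ (a^2 - t^2) * (2 - a^2 - t^2) := by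
          calc (a - t)*(2*a*(1-a^2)) = (a - t)*(a*(2 - 2*a^2)) := by ring
            _ ≤ (a - t)*((a + t)*(2 - a^2 - t^2)) :=
                mul_le_mul_of_nonneg_left key (by linarith)
            _ = (a^2 - t^2)*(2 - a^2 - t^2) := by ring
        rw [hgdef, heq]; dsimp only
        gcongr

      have hs : Real.sqrt ((a - t) * c1) ≤ Real.sqrt (g t) := Real.sqrt_le_sqrt hN
      have hspos : 0 < Real.sqrt ((a - t) * c1) :=
        Real.sqrt_pos.2 (mul_pos (by linarith) hc1)
      rw [abs_of_nonneg (h_nonneg t)]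
      calc h t ≤ (Real.sqrt ((a - t) * c1))⁻¹ := by
            rw [hhdef]; exact inv_anti₀ hspos hs
        _ = (Real.sqrt c1)⁻¹ * (Real.sqrt (a - t))⁻¹ := by
            rw [Real.sqrt_mul (by linarith : (0:ℝ) ≤ a - t), mul_inv, mul_comm]
    · rw [hhdef]; dsimp only
      rw [hga]
      simp
  have h_int_left : IntervalIntegrable h volume (-a) 0 := by
    have h1 := (IntervalIntegrable.iff_comp_neg (by simp)).mp h_int_right
    have h2 : (fun x => h (-x)) = h := funext h_even
    rw [h2] at h1
    simpa using h1.symm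
  have h_int : IntervalIntegrable h volume (-a) a := h_int_left.trans h_int_right
  have haa : -a ≤ a := by linarith
  have h_int_sub : ∀ u w, u ∈ Icc (-a) a → w ∈ Icc (-a) a →
      IntervalIntegrable h volume u w := by
    intro u w hu hw
    apply h_int.mono_set
    apply uIcc_subset_uIcc (by rw [uIcc_of_le haa]; exact hu) (by rw [uIcc_of_le haa]; exact hw)
  set F : ℝ → ℝ := fun u => ∫ t in (0:ℝ)..u, h t with hFdef
  have h0mem : (0:ℝ) ∈ Icc (-a) a := ⟨by linarith, ha0.le⟩
  have hamem : a ∈ Icc (-a) a := ⟨haa, le_refl a⟩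
  have hnamem : -a ∈ Icc (-a) a := ⟨le_refl _, haa⟩
  have F_sub : ∀ u ∈ Icc (-a) a, ∀ w ∈ Icc (-a) a,
      F w - F u = ∫ t in u..w, h t := by
    intro u hu w hw
    have := integral_add_adjacent_intervals (h_int_sub 0 u h0mem hu) (h_int_sub u w hu hw)
    rw [hFdef]; dsimp only
    linarith [this]
  have F_mono : StrictMonoOn F (Icc (-a) a) := by
    intro u hu w hw huw
    have hpos : 0 < ∫ t in u..w, h t := by
      apply intervalIntegral.intervalIntegral_pos_of_pos_on (h_int_sub u w hu hw) _ huw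
      intro t ht
      exact h_pos t (abs_lt.2 ⟨by linarith [hu.1, ht.1], by linarith [hw.2, ht.2]⟩)
    have := F_sub u hu w hw
    linarith
  have hIccInt : IntegrableOn h (uIcc (-a) a) volume := by
    rw [uIcc_of_le haa]
    rw [← intervalIntegrable_iff_integrableOn_Icc_of_le haa]
    exact h_int
  have F_cont : ContinuousOn F (Icc (-a) a) := by
    have hprim := intervalIntegral.continuousOn_primitive_interval (a := -a) (b := a) hIccInt
    rw [uIcc_of_le haa] at hprim
    have heq : ∀ x ∈ Icc (-a) a,
        (∫ t in (0:ℝ)..(-a), h t) + (∫ t in (-a)..x, h t) = F x := by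
      intro x hx
      exact integral_add_adjacent_intervals (h_int_sub 0 (-a) h0mem hnamem)
        (h_int_sub (-a) x hnamem hx)
    exact ContinuousOn.congr (continuousOn_const.add hprim) (fun x hx => (heq x hx).symm)
  have F_zero : F 0 = 0 := integral_same
  set L : ℝ := F a with hLdef
  have L_pos : 0 < L := by
    have := F_mono h0mem hamem ha0
    rw [F_zero] at this
    exact this
  have F_odd : ∀ u, F (-u) = -F u := by
    intro u
    have h1 : (∫ x in u..(0:ℝ), h (-x)) = ∫ x in (-0:ℝ)..(-u), h x :=
      integral_comp_neg (fun x => h x)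
    have h2 : (fun x : ℝ => h (-x)) = h := funext h_even
    rw [h2] at h1
    have h3 : (∫ x in (-0:ℝ)..(-u), h x) = F (-u) := by rw [hFdef]; norm_num
    rw [h3] at h1
    rw [← h1, intervalIntegral.integral_symm]
  have F_neg_a : F (-a) = -L := by rw [F_odd]
  have F_deriv : ∀ u ∈ Ioo (-a) a, HasDerivAt F (h u) u := by
    intro u hu
    exact intervalIntegral.integral_hasDerivAt_right
      (h_int_sub 0 u h0mem (Ioo_subset_Icc_self hu))
      (h_contOn.stronglyMeasurableAtFilter isOpen_Ioo u hu)
      (h_contAt u (abs_lt.2 ⟨hu.1, hu.2⟩))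
  -- inverse function
  have hmapsTo : MapsTo F (Icc (-a) a) (Icc (-L) L) := by
    intro u hu
    constructor
    · rw [← F_neg_a]
      exact F_mono.monotoneOn hnamem hu hu.1
    · rw [hLdef]
      exact F_mono.monotoneOn hu hamem hu.2
  have hsurj : SurjOn F (Icc (-a) a) (Icc (-L) L) := by
    have := intermediate_value_Icc haa F_cont
    rw [F_neg_a] at this
    exact this
  set FS : ↥(Icc (-a) a) → ↥(Icc (-L) L) := fun u => ⟨F u, hmapsTo u.2⟩ with hFSdef
  have hFS_cont : Continuous FS :=
    Continuous.subtype_mk (F_cont.comp_continuous continuous_subtype_val (fun x => x.2)) _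
  have hFS_bij : Function.Bijective FS := by
    constructor
    · intro u w huw
      exact Subtype.ext (F_mono.injOn u.2 w.2 (congrArg Subtype.val huw))
    · intro y
      obtain ⟨u, hu, hFu⟩ := hsurj y.2
      exact ⟨⟨u, hu⟩, Subtype.ext hFu⟩
  haveI : CompactSpace ↥(Icc (-a) a) := isCompact_iff_compactSpace.mp isCompact_Icc
  set e : ↥(Icc (-a) a) ≃ ↥(Icc (-L) L) := Equiv.ofBijective FS hFS_bij with hedef
  have he_cont : Continuous e := hFS_cont
  set homeo : ↥(Icc (-a) a) ≃ₜ ↥(Icc (-L) L) := he_cont.homeoOfEquivCompactToT2 with hhomeodef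
  have hLL : -L ≤ L := by linarith
  set v0 : ℝ → ℝ := fun y => ((homeo.symm (Set.projIcc (-L) L hLL y)) : ℝ) with hv0def
  have v0_cont : Continuous v0 :=
    continuous_subtype_val.comp (homeo.symm.continuous.comp continuous_projIcc)
  have v0_mem : ∀ y, v0 y ∈ Icc (-a) a := fun y => (homeo.symm _).2
  have v0F : ∀ u, ∀ hu : u ∈ Icc (-a) a, v0 (F u) = u := by
    intro u hu
    rw [hv0def]; dsimp only
    rw [projIcc_of_mem hLL (hmapsTo hu)]
    have hfe : (⟨F u, hmapsTo hu⟩ : ↥(Icc (-L) L)) = homeo ⟨u, hu⟩ := rfl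
    rw [hfe, Homeomorph.symm_apply_apply]
  have Fv0 : ∀ y, y ∈ Icc (-L) L → F (v0 y) = y := by
    intro y hy
    rw [hv0def]; dsimp only
    rw [projIcc_of_mem hLL hy]
    have := homeo.apply_symm_apply ⟨y, hy⟩
    have h2 : F ((homeo.symm ⟨y, hy⟩ : ↥(Icc (-a) a)) : ℝ) =
        ((homeo (homeo.symm ⟨y, hy⟩) : ↥(Icc (-L) L)) : ℝ) := rfl
    rw [h2, this]
  have v0_zero : v0 0 = 0 := by
    have := v0F 0 h0mem
    rwa [F_zero] at this
  have v0_L : v0 L = a := by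
    have := v0F a hamem
    rwa [← hLdef] at this
  have v0_mono : StrictMonoOn v0 (Icc (-L) L) := by
    intro y1 h1 y2 h2 hlt
    by_contra hcon
    push_neg at hcon
    have := F_mono.monotoneOn (v0_mem y2) (v0_mem y1) hcon
    rw [Fv0 y1 h1, Fv0 y2 h2] at this
    linarith
  have v0_odd : ∀ y ∈ Icc (-L) L, v0 (-y) = -v0 y := by
    intro y hy
    have hmem : -(v0 y) ∈ Icc (-a) a := by
      have := v0_mem y
      constructor <;> [linarith [this.2]; linarith [this.1]]
    have hFy : F (-(v0 y)) = -y := by rw [F_odd, Fv0 y hy]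
    calc v0 (-y) = v0 (F (-(v0 y))) := by rw [hFy]
      _ = -(v0 y) := v0F _ hmem
  have v0_negL : v0 (-L) = -a := by
    rw [v0_odd L ⟨hLL, le_refl L⟩, v0_L]
  have v0_Ioo : ∀ y ∈ Ioo (-L) L, v0 y ∈ Ioo (-a) a := by
    intro y hy
    constructor
    · rw [← v0_negL]
      exact v0_mono ⟨le_refl _, hLL⟩ (Ioo_subset_Icc_self hy) hy.1
    · rw [← v0_L]
      exact v0_mono (Ioo_subset_Icc_self hy) ⟨hLL, le_refl L⟩ hy.2
  have v0_deriv : ∀ y ∈ Ioo (-L) L, HasDerivAt v0 (Real.sqrt (g (v0 y))) y := by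
    intro y hy
    have hu : v0 y ∈ Ioo (-a) a := v0_Ioo y hy
    have hF := F_deriv (v0 y) hu
    have hne : h (v0 y) ≠ 0 := (h_pos _ (abs_lt.2 ⟨hu.1, hu.2⟩)).ne'
    have hev : ∀ᶠ z in nhds y, F (v0 z) = z :=
      Filter.eventually_of_mem (isOpen_Ioo.mem_nhds hy)
        (fun z hz => Fv0 z (Ioo_subset_Icc_self hz))
    have hd := HasDerivAt.of_local_left_inverse v0_cont.continuousAt hF hne hev
    have hinv : (h (v0 y))⁻¹ = Real.sqrt (g (v0 y)) := by
      rw [hhdef]; dsimp only; rw [inv_inv]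
    rwa [hinv] at hd
  exact ⟨v0, L, rfl, L_pos, v0_cont, v0_mem, v0_zero, v0_L, v0_mono.injOn, v0_odd,
    v0_Ioo, v0_deriv⟩


lemma intervalIntegrable_of_bound_inv_sqrt'' {f : ℝ → ℝ} {p q C : ℝ} (hpq : p ≤ q)
    (hmeas : Measurable f)
    (hbd : ∀ t ∈ Set.Ioc p q, |f t| ≤ C * (Real.sqrt (q - t))⁻¹) :
    IntervalIntegrable f volume p q := by
  have hrpow : IntervalIntegrable (fun t : ℝ => C * (q - t) ^ (-(1/2) : ℝ)) volume p q := by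
    have h1 : IntervalIntegrable (fun x : ℝ => x ^ (-(1/2) : ℝ)) volume (q - p) (q - q) :=
      intervalIntegrable_rpow' (by norm_num)
    have := (h1.comp_sub_left q).const_mul C
    simpa using this
  apply hrpow.mono_fun (hmeas.aestronglyMeasurable)
  rw [Filter.EventuallyLE, ae_restrict_iff' measurableSet_uIoc]
  apply Filter.Eventually.of_forall
  intro t ht
  rw [Set.uIoc_of_le hpq] at ht
  have h1 : (Real.sqrt (q - t))⁻¹ = (q - t) ^ (-(1/2) : ℝ) := by
    rw [Real.sqrt_eq_rpow, ← Real.rpow_neg (by linarith [ht.2])]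
  calc ‖f t‖ = |f t| := rfl
    _ ≤ C * (Real.sqrt (q - t))⁻¹ := hbd t ht
    _ = C * (q - t) ^ (-(1/2) : ℝ) := by rw [h1]
    _ ≤ ‖C * (q - t) ^ (-(1/2) : ℝ)‖ := le_abs_self _

set_option maxHeartbeats 1000000 in
lemma exists_amp (ε : ℝ) (hε : 0 < ε) (T4 : ℝ) (hT4 : Real.pi * ε / 2 < T4) :
    ∃ a : ℝ, 0 < a ∧ a < 1 ∧
      (∫ t in (0:ℝ)..a, (Real.sqrt ((a^2 - t^2) * (2 - a^2 - t^2) / (2*ε^2)))⁻¹) = T4 := by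
  have hπ := Real.pi_pos
  have hT4pos : 0 < T4 := lt_trans (by positivity) hT4
  set k : ℝ → ℝ → ℝ :=
    fun A s => (Real.sqrt ((1 - s^2) * (2 - A^2*(1+s^2)) / (2*ε^2)))⁻¹ with hkdef
  set J : ℝ → ℝ := fun A => ∫ s in (0:ℝ)..1, k A s with hJdef
  have hk_meas : ∀ A, Measurable (k A) := by
    intro A
    apply Measurable.inv
    apply Real.continuous_sqrt.measurable.comp
    fun_prop
  have hk_nonneg : ∀ A s, 0 ≤ k A s := fun A s => inv_nonneg.2 (Real.sqrt_nonneg _)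
  -- pointwise domination for A ∈ [0,c], c < 1
  have hk_bound : ∀ c : ℝ, c < 1 → ∀ A, 0 ≤ A → A ≤ c → ∀ s ∈ Set.Ioc (0:ℝ) 1,
      |k A s| ≤ (Real.sqrt ((1-c^2)/ε^2))⁻¹ * (Real.sqrt (1 - s))⁻¹ := by
    intro c hc A hA0 hAc s hs
    have hc0 : (0:ℝ) ≤ c := le_trans hA0 hAc
    have hc2 : (0:ℝ) < 1 - c^2 := by nlinarith
    rcases hs.2.lt_or_eq with hs1 | rfl
    · have hs0 : 0 < s := hs.1
      have e3 : 2 - 2*c^2 ≤ 2 - A^2*(1+s^2) := by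
        have h5 : A^2 ≤ c^2 := by nlinarith
        have h6 : 1 + s^2 ≤ 2 := by nlinarith
        nlinarith [mul_le_mul h5 h6 (by positivity) (sq_nonneg c)]
      have e4 : (1-s)*1 ≤ (1-s)*(1+s) := by nlinarith
      have key : (1-s)*(2*(1-c^2)) ≤ (1-s^2)*(2-A^2*(1+s^2)) := by
        calc (1-s)*(2*(1-c^2)) = ((1-s)*1) * (2 - 2*c^2) := by ring
          _ ≤ ((1-s)*(1+s)) * (2-A^2*(1+s^2)) :=
              mul_le_mul e4 e3 (by linarith) (by nlinarith)
          _ = (1-s^2)*(2-A^2*(1+s^2)) := by ring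
      have hQlb : (1-s) * ((1-c^2)/ε^2) ≤ (1-s^2)*(2-A^2*(1+s^2))/(2*ε^2) := by
        have heq : (1-s) * ((1-c^2)/ε^2) = ((1-s)*(2*(1-c^2)))/(2*ε^2) := by
          field_simp
        rw [heq]
        gcongr
      have hsppos : 0 < Real.sqrt ((1-s) * ((1-c^2)/ε^2)) :=
        Real.sqrt_pos.2 (mul_pos (by linarith) (by positivity))
      rw [abs_of_nonneg (hk_nonneg A s), hkdef]
      calc (Real.sqrt ((1 - s^2) * (2 - A^2*(1+s^2)) / (2*ε^2)))⁻¹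
          ≤ (Real.sqrt ((1-s) * ((1-c^2)/ε^2)))⁻¹ :=
            inv_anti₀ hsppos (Real.sqrt_le_sqrt hQlb)
        _ = (Real.sqrt ((1-c^2)/ε^2))⁻¹ * (Real.sqrt (1 - s))⁻¹ := by
            rw [Real.sqrt_mul (by linarith : (0:ℝ) ≤ 1 - s), mul_inv, mul_comm]
    · rw [hkdef]; dsimp only
      norm_num
  have hk_int : ∀ A, 0 ≤ A → A < 1 → IntervalIntegrable (k A) volume 0 1 := by
    intro A hA0 hA1
    exact intervalIntegrable_of_bound_inv_sqrt'' zero_le_one (hk_meas A)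
      (hk_bound A hA1 A hA0 le_rfl)
  -- substitution : the quarter period equals J a
  have hsubst : ∀ a : ℝ, 0 < a → a < 1 →
      (∫ t in (0:ℝ)..a, (Real.sqrt ((a^2 - t^2) * (2 - a^2 - t^2) / (2*ε^2)))⁻¹) = J a := by
    intro a ha0 ha1
    have hcomp := intervalIntegral.integral_comp_mul_left
      (f := fun t => (Real.sqrt ((a^2 - t^2) * (2 - a^2 - t^2) / (2*ε^2)))⁻¹)
      (a := (0:ℝ)) (b := (1:ℝ)) (c := a) ha0.ne'
    have hpt : ∀ s ∈ uIcc (0:ℝ) 1,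
        (Real.sqrt ((a^2 - (a*s)^2) * (2 - a^2 - (a*s)^2) / (2*ε^2)))⁻¹ = a⁻¹ * k a s := by
      intro s hs
      have harg : (a^2 - (a*s)^2) * (2 - a^2 - (a*s)^2) / (2*ε^2)
          = a^2 * ((1 - s^2) * (2 - a^2*(1+s^2)) / (2*ε^2)) := by ring
      rw [harg, Real.sqrt_mul (sq_nonneg a), Real.sqrt_sq ha0.le, mul_inv, hkdef]
    rw [mul_zero, mul_one] at hcomp
    have h1 : (∫ s in (0:ℝ)..1,
        (Real.sqrt ((a^2 - (a*s)^2) * (2 - a^2 - (a*s)^2) / (2*ε^2)))⁻¹) = a⁻¹ * J a := by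
      rw [intervalIntegral.integral_congr hpt, intervalIntegral.integral_const_mul, hJdef]
    rw [h1, smul_eq_mul] at hcomp
    have ha' : a⁻¹ ≠ 0 := inv_ne_zero ha0.ne'
    exact (mul_left_cancel₀ ha' hcomp.symm)
  -- continuity of J on [0,c] for c < 1
  have hJcont : ∀ c : ℝ, 0 < c → c < 1 → ContinuousOn J (Icc 0 c) := by
    intro c hc0 hc1
    rw [continuousOn_iff_continuous_restrict]
    have hc2 : (0:ℝ) < 1 - c^2 := by nlinarith
    apply intervalIntegral.continuous_of_dominated_interval
      (bound := fun s => (Real.sqrt ((1-c^2)/ε^2))⁻¹ * (Real.sqrt (1 - s))⁻¹)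
    · intro A
      exact ((hk_meas A).aestronglyMeasurable)
    · intro A
      apply Filter.Eventually.of_forall
      intro s hs
      rw [uIoc_of_le zero_le_one] at hs
      exact hk_bound c hc1 (A:ℝ) A.2.1 A.2.2 s hs
    · apply intervalIntegrable_of_bound_inv_sqrt'' zero_le_one
      · exact (measurable_const.mul ((Real.continuous_sqrt.measurable.comp
          (by fun_prop)).inv))
      · intro t ht
        rw [abs_of_nonneg (by positivity)]
    · have hne : ∀ᵐ s : ℝ ∂volume, s ≠ 1 := by
        rw [MeasureTheory.ae_iff]
        have hset : {s : ℝ | ¬ s ≠ 1} = {1} := by ext; simp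
        rw [hset]
        exact measure_singleton 1
      filter_upwards [hne] with s hs1
      intro hsmem
      rw [uIoc_of_le zero_le_one] at hsmem
      have hslt : s < 1 := lt_of_le_of_ne hsmem.2 hs1
      have hs0 : 0 < s := hsmem.1
      apply Continuous.inv₀
      · apply Real.continuous_sqrt.comp
        have : Continuous (fun A : ↥(Icc (0:ℝ) c) => (A:ℝ)) := continuous_subtype_val
        fun_prop
      · intro A
        have hA2 : (A:ℝ)^2 ≤ c^2 := pow_le_pow_left₀ A.2.1 A.2.2 2
        have hQpos : 0 < (1 - s^2) * (2 - (A:ℝ)^2*(1+s^2)) / (2*ε^2) := by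
          apply div_pos _ (by positivity)
          apply mul_pos (by nlinarith) (by nlinarith)
        exact (Real.sqrt_pos.2 hQpos).ne'
  -- integrability and value of the arcsin integral
  have harc_meas : Measurable (fun s : ℝ => (Real.sqrt (1-s^2))⁻¹) :=
    (Real.continuous_sqrt.measurable.comp (by fun_prop)).inv
  have harcsin_int : IntervalIntegrable (fun s : ℝ => (Real.sqrt (1-s^2))⁻¹) volume 0 1 := by
    apply intervalIntegrable_of_bound_inv_sqrt'' zero_le_one harc_meas (C := 1)
    intro t ht
    rw [abs_of_nonneg (inv_nonneg.2 (Real.sqrt_nonneg _)), one_mul]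
    rcases ht.2.lt_or_eq with h1 | rfl
    · have hpos : 0 < Real.sqrt (1 - t) := Real.sqrt_pos.2 (by linarith)
      apply inv_anti₀ hpos
      apply Real.sqrt_le_sqrt
      nlinarith [ht.1]
    · norm_num
  have hIarc : (∫ s in (0:ℝ)..1, (Real.sqrt (1-s^2))⁻¹) = π/2 := by
    have hd : ∀ x ∈ Ioo (0:ℝ) 1,
        HasDerivWithinAt Real.arcsin ((Real.sqrt (1-x^2))⁻¹) (Ioi x) x := by
      intro x hx
      have hh := Real.hasDerivAt_arcsin (by intro h; rw [h] at hx; norm_num at hx)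
        (ne_of_lt hx.2)
      rw [one_div] at hh
      exact hh.hasDerivWithinAt
    have heval := intervalIntegral.integral_eq_sub_of_hasDeriv_right_of_le zero_le_one
      (Real.continuous_arcsin.continuousOn) hd harcsin_int
    rw [Real.arcsin_one, Real.arcsin_zero] at heval
    rw [heval]
    ring
  -- choice of a1 with J a1 < T4
  set ρ : ℝ := π * ε / (2 * T4) with hρdef
  have hρ0 : 0 < ρ := by positivity
  have hρ1 : ρ < 1 := by
    rw [hρdef, div_lt_one (by positivity)]
    linarith
  set a1 : ℝ := Real.sqrt ((1 - ρ^2)/2) with ha1def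
  have ha1pos : 0 < a1 := Real.sqrt_pos.2 (by nlinarith)
  have ha1sq : a1^2 = (1-ρ^2)/2 := Real.sq_sqrt (by nlinarith)
  have ha1lt : a1 < 1 := by nlinarith [ha1sq, ha1pos]
  have ha1v : ρ < Real.sqrt (1 - a1^2) := by
    have h1 : 1 - a1^2 = (1+ρ^2)/2 := by rw [ha1sq]; ring
    have h2 : ρ^2 < (1+ρ^2)/2 := by nlinarith
    calc ρ = Real.sqrt (ρ^2) := (Real.sqrt_sq hρ0.le).symm
      _ < Real.sqrt (1 - a1^2) := by
          rw [h1]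
          exact Real.sqrt_lt_sqrt (sq_nonneg ρ) h2
  have hJa1 : J a1 < T4 := by
    set C1 : ℝ := (Real.sqrt ((1-a1^2)/ε^2))⁻¹ with hC1def
    have hsq1 : 0 < 1 - a1^2 := by nlinarith
    have hC1v : C1 = ε / Real.sqrt (1-a1^2) := by
      rw [hC1def, Real.sqrt_div hsq1.le, Real.sqrt_sq hε.le, inv_div]
    have hbd2 : ∀ s ∈ Icc (0:ℝ) 1, k a1 s ≤ C1 * (Real.sqrt (1-s^2))⁻¹ := by
      intro s hs
      rcases hs.2.lt_or_eq with hs1 | rfl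
      · have hQlb : (1-s^2) * ((1-a1^2)/ε^2) ≤ (1-s^2)*(2-a1^2*(1+s^2))/(2*ε^2) := by
          have key : (1-s^2)*(2*(1-a1^2)) ≤ (1-s^2)*(2-a1^2*(1+s^2)) := by
            apply mul_le_mul_of_nonneg_left _ (by nlinarith [hs.1, hs1])
            have h6 : s^2 ≤ 1 := by nlinarith [hs.1, hs1]
            nlinarith [mul_le_mul_of_nonneg_left h6 (sq_nonneg a1)]
          have heq : (1-s^2) * ((1-a1^2)/ε^2) = ((1-s^2)*(2*(1-a1^2)))/(2*ε^2) := by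
            field_simp
          rw [heq]
          gcongr
        have hsppos : 0 < Real.sqrt ((1-s^2) * ((1-a1^2)/ε^2)) :=
          Real.sqrt_pos.2 (by
            apply mul_pos (by nlinarith [hs.1]) (by positivity))
        rw [hkdef]
        calc (Real.sqrt ((1 - s^2) * (2 - a1^2*(1+s^2)) / (2*ε^2)))⁻¹
            ≤ (Real.sqrt ((1-s^2) * ((1-a1^2)/ε^2)))⁻¹ :=
              inv_anti₀ hsppos (Real.sqrt_le_sqrt hQlb)
          _ = C1 * (Real.sqrt (1-s^2))⁻¹ := by
              rw [Real.sqrt_mul (by nlinarith [hs.1] : (0:ℝ) ≤ 1 - s^2), mul_inv,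
                mul_comm, hC1def]
      · rw [hkdef]; dsimp only
        norm_num
    have hint1 : IntervalIntegrable (k a1) volume 0 1 := hk_int a1 ha1pos.le ha1lt
    have hint2 : IntervalIntegrable (fun s => C1 * (Real.sqrt (1-s^2))⁻¹) volume 0 1 :=
      harcsin_int.const_mul C1
    have hmono := intervalIntegral.integral_mono_on zero_le_one hint1 hint2 hbd2
    have hval : (∫ s in (0:ℝ)..1, C1 * (Real.sqrt (1-s^2))⁻¹) = C1 * (π/2) := by
      rw [intervalIntegral.integral_const_mul, hIarc]
    rw [hval] at hmono
    have hfin : C1 * (π/2) < T4 := by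
      rw [hC1v]
      have hsp : 0 < Real.sqrt (1 - a1^2) := Real.sqrt_pos.2 hsq1
      rw [div_mul_eq_mul_div, div_lt_iff₀ hsp]
      have hT4v : T4 * ρ = π * ε / 2 := by
        rw [hρdef]; field_simp; try ring
      calc ε * (π/2) = T4 * ρ := by rw [hT4v]; ring
        _ < T4 * Real.sqrt (1-a1^2) := by
            exact mul_lt_mul_of_pos_left ha1v hT4pos
    calc J a1 ≤ C1 * (π/2) := hmono
      _ < T4 := hfin
  -- choice of a2 with T4 < J a2
  set δ : ℝ := Real.exp (-(Real.sqrt 2 * T4/ε + 1)) with hδdef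
  have h2s : (0:ℝ) < Real.sqrt 2 := Real.sqrt_pos.2 two_pos
  have hδ0 : 0 < δ := Real.exp_pos _
  have hδ1 : δ < 1 := by
    rw [hδdef]
    apply Real.exp_lt_one_iff.2
    have : 0 < Real.sqrt 2 * T4/ε := by positivity
    linarith
  have hlogδ : Real.log δ = -(Real.sqrt 2 * T4/ε + 1) := by rw [hδdef, Real.log_exp]
  set a2 : ℝ := Real.sqrt (1 - δ) with ha2def
  have ha2pos : 0 < a2 := Real.sqrt_pos.2 (by linarith)
  have ha2sq : a2^2 = 1 - δ := Real.sq_sqrt (by linarith)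
  have ha2lt : a2 < 1 := by nlinarith [ha2sq, ha2pos]
  have hδeq : 2 - a2^2 = 1 + δ := by rw [ha2sq]; ring
  have hJa2 : T4 < J a2 := by
    have hlb_int : IntervalIntegrable (fun s : ℝ => ε / (Real.sqrt 2 * (1+δ-s))) volume 0 1 := by
      apply ContinuousOn.intervalIntegrable
      apply ContinuousOn.div continuousOn_const (by fun_prop)
      intro s hs
      rw [uIcc_of_le zero_le_one] at hs
      have : 0 < 1 + δ - s := by linarith [hs.2]
      positivity
    have hptwise : ∀ s, 0 ≤ s → s < 1 →
        ε / (Real.sqrt 2 * (1+δ-s)) ≤ k a2 s := by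
      intro s hs0 hs1
      have hds : 0 < 1 + δ - s := by linarith
      set D : ℝ := Real.sqrt 2 * (1+δ-s) / ε with hDdef
      have hD0 : 0 < D := by positivity
      have hss' : (0:ℝ) < 1 - s^2 := by nlinarith [hs0, hs1]
      have hss : (0:ℝ) ≤ 1 - s^2 := hss'.le
      have hds2 : (0:ℝ) ≤ δ * (1 - s^2) := mul_nonneg hδ0.le hss
      have hds3 : (0:ℝ) ≤ δ * (1 + s^2) := mul_nonneg hδ0.le (by positivity)
      have e0 : (0:ℝ) < 2 - a2^2*(1+s^2) := by
        rw [ha2sq]; linarith [hds3]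
      have hQpos : 0 < (1 - s^2) * (2 - a2^2*(1+s^2)) / (2*ε^2) :=
        div_pos (mul_pos hss' e0) (by positivity)
      have hQub : (1 - s^2) * (2 - a2^2*(1+s^2)) / (2*ε^2) ≤ D^2 := by
        have hD2 : D^2 = 2 * (1+δ-s)^2 / ε^2 := by
          rw [hDdef, div_pow, mul_pow, Real.sq_sqrt (by norm_num : (0:ℝ) ≤ 2)]
        rw [hD2]
        rw [div_le_div_iff₀ (by positivity) (by positivity)]
        have hN : (1 - s^2) * (2 - a2^2*(1+s^2)) ≤ 4 * (1+δ-s)^2 := by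
          have e1 : 1 - s^2 ≤ 2*(1+δ-s) := by linarith [sq_nonneg (1-s), hδ0.le]
          have e2 : 2 - a2^2*(1+s^2) ≤ 2*(1+δ-s) := by
            rw [ha2sq]; linarith [sq_nonneg (1-s), hds2]
          calc (1 - s^2) * (2 - a2^2*(1+s^2)) ≤ (2*(1+δ-s)) * (2*(1+δ-s)) :=
                mul_le_mul e1 e2 e0.le (by linarith)
            _ = 4 * (1+δ-s)^2 := by ring
        nlinarith [mul_le_mul_of_nonneg_right hN (sq_nonneg ε)]
      have hsqrtQ : Real.sqrt ((1 - s^2) * (2 - a2^2*(1+s^2)) / (2*ε^2)) ≤ D := by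
        calc Real.sqrt ((1 - s^2) * (2 - a2^2*(1+s^2)) / (2*ε^2)) ≤ Real.sqrt (D^2) :=
              Real.sqrt_le_sqrt hQub
          _ = D := Real.sqrt_sq hD0.le
      have hinv : D⁻¹ ≤ (Real.sqrt ((1 - s^2) * (2 - a2^2*(1+s^2)) / (2*ε^2)))⁻¹ :=
        inv_anti₀ (Real.sqrt_pos.2 hQpos) hsqrtQ
      have hDinv : D⁻¹ = ε / (Real.sqrt 2 * (1+δ-s)) := by
        rw [hDdef, inv_div]
      rw [hkdef]
      calc ε / (Real.sqrt 2 * (1+δ-s)) = D⁻¹ := hDinv.symm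
        _ ≤ _ := hinv
    have hae : (fun s : ℝ => ε / (Real.sqrt 2 * (1+δ-s)))
        ≤ᵐ[volume.restrict (Icc (0:ℝ) 1)] k a2 := by
      have hne : ∀ᵐ s : ℝ ∂(volume.restrict (Icc (0:ℝ) 1)), s ≠ 1 := by
        apply ae_restrict_of_ae
        rw [MeasureTheory.ae_iff]
        have hset : {s : ℝ | ¬ s ≠ 1} = {1} := by ext; simp
        rw [hset]
        exact measure_singleton 1
      have hmem : ∀ᵐ s : ℝ ∂(volume.restrict (Icc (0:ℝ) 1)), s ∈ Icc (0:ℝ) 1 :=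
        ae_restrict_mem measurableSet_Icc
      filter_upwards [hne, hmem] with s hs1 hs2
      exact hptwise s hs2.1 (lt_of_le_of_ne hs2.2 hs1)
    have hint2 : IntervalIntegrable (k a2) volume 0 1 := hk_int a2 ha2pos.le ha2lt
    have hmono := intervalIntegral.integral_mono_ae_restrict zero_le_one hlb_int hint2 hae
    have hI2 : (∫ s in (0:ℝ)..1, ε / (Real.sqrt 2 * (1+δ-s)))
        = (ε/Real.sqrt 2) * (Real.log (1+δ) - Real.log δ) := by
      have hfn : (fun s : ℝ => ε / (Real.sqrt 2 * (1+δ-s)))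
          = fun s => (ε/Real.sqrt 2) * (1+δ-s)⁻¹ := by
        funext s
        field_simp
      rw [hfn, intervalIntegral.integral_const_mul]
      have hcs := intervalIntegral.integral_comp_sub_left (a := (0:ℝ)) (b := 1)
        (fun u : ℝ => u⁻¹) (1+δ)
      rw [show (1:ℝ)+δ-1 = δ by ring, show (1:ℝ)+δ-0 = 1+δ by ring] at hcs
      rw [hcs, integral_inv]
      · rw [Real.log_div (by linarith) hδ0.ne']
      · rw [uIcc_of_le (by linarith)]
        rintro ⟨h1, h2⟩
        linarith
    have hbig : T4 < (ε/Real.sqrt 2) * (Real.log (1+δ) - Real.log δ) := by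
      rw [hlogδ]
      have hlog1δ : 0 ≤ Real.log (1+δ) := Real.log_nonneg (by linarith)
      have hε2 : 0 < ε / Real.sqrt 2 := by positivity
      have hstep : Real.sqrt 2 * T4/ε + 1 ≤ Real.log (1+δ) - (-(Real.sqrt 2 * T4/ε + 1)) := by
        linarith
      calc T4 = (ε/Real.sqrt 2) * (Real.sqrt 2 * T4/ε) := by
            field_simp
            try ring
          _ < (ε/Real.sqrt 2) * (Real.sqrt 2 * T4/ε + 1) :=
            mul_lt_mul_of_pos_left (lt_add_one _) hε2
          _ ≤ (ε/Real.sqrt 2) * (Real.log (1+δ) - (-(Real.sqrt 2 * T4/ε + 1))) :=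
            mul_le_mul_of_nonneg_left hstep hε2.le
    calc T4 < (ε/Real.sqrt 2) * (Real.log (1+δ) - Real.log δ) := hbig
      _ = ∫ s in (0:ℝ)..1, ε / (Real.sqrt 2 * (1+δ-s)) := hI2.symm
      _ ≤ J a2 := hmono
  -- IVT
  set c : ℝ := max a1 a2 with hcdef
  have hc1 : c < 1 := max_lt ha1lt ha2lt
  have hc0 : 0 < c := lt_max_of_lt_left ha1pos
  have hcont := hJcont c hc0 hc1
  have hsub2 : uIcc a1 a2 ⊆ Icc 0 c := by
    apply Set.Icc_subset_Icc
    · exact le_min ha1pos.le ha2pos.le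
    · exact sup_le (le_max_left _ _) (le_max_right _ _)
  have hIVT := intermediate_value_uIcc (hcont.mono hsub2)
  have hT4mem : T4 ∈ uIcc (J a1) (J a2) := by
    rw [uIcc_of_le (by linarith : J a1 ≤ J a2)]
    exact ⟨hJa1.le, hJa2.le⟩
  obtain ⟨A, hAmem, hJA⟩ := hIVT hT4mem
  have hA0 : 0 < A := lt_of_lt_of_le (lt_min ha1pos ha2pos) hAmem.1
  have hA1 : A < 1 := lt_of_le_of_lt (hAmem.2.trans (sup_le (le_max_left _ _) (le_max_right _ _))) hc1
  exact ⟨A, hA0, hA1, by rw [hsubst A hA0 hA1]; exact hJA⟩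

set_option maxHeartbeats 1000000 in
/-- For `ε = (π(m+1))⁻¹`, the Duffing equation `ε²u'' + u - u³ = 0` has a nonconstant
solution of minimal period `2/m`, and the shifted pair intersects exactly `m` times
over one spatial period. -/
theorem stmt_14 (m : ℕ) (hm : 0 < m) :
    ∃ v : ℝ → ℝ,
      ContDiff ℝ 2 v ∧
      (∀ x : ℝ,
        ((Real.pi * ((m : ℝ) + 1))⁻¹) ^ 2 * deriv (deriv v) x + v x - (v x) ^ 3 = 0) ∧
      (¬ ∃ c : ℝ, ∀ x : ℝ, v x = c) ∧
      Function.Periodic v (2 / (m : ℝ)) ∧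
      (∀ T : ℝ, 0 < T → T < 2 / (m : ℝ) → ¬ Function.Periodic v T) ∧
      ({x ∈ Set.Ico (0:ℝ) 1 | v x = v (x - 1 / (m : ℝ))}).ncard = m := by
  have hπ := Real.pi_pos
  have hm' : (0:ℝ) < (m:ℝ) := by exact_mod_cast hm
  set ε : ℝ := (Real.pi * ((m:ℝ)+1))⁻¹ with hεdef
  have hε : 0 < ε := by rw [hεdef]; positivity
  set T4 : ℝ := 1/(2*(m:ℝ)) with hT4def
  have hT4 : Real.pi * ε / 2 < T4 := by
    have h1 : Real.pi * ε = ((m:ℝ)+1)⁻¹ := by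
      rw [hεdef, mul_inv, ← mul_assoc, mul_inv_cancel₀ hπ.ne', one_mul]
    rw [h1, hT4def, div_lt_div_iff₀ two_pos (by positivity : (0:ℝ) < 2*(m:ℝ)),
      inv_mul_eq_div, div_lt_iff₀ (by positivity : (0:ℝ) < (m:ℝ)+1)]
    linarith
  obtain ⟨a, ha0, ha1, haint⟩ := exists_amp ε hε T4 hT4
  obtain ⟨v0, L, hLeq, hL, v0_cont, v0_mem, v0_zero, v0_L, v0_inj, v0_odd, v0_Ioo, v0_deriv⟩ :=
    quad ε a hε ha0 ha1
  rw [haint] at hLeq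
  -- g facts
  set g : ℝ → ℝ := fun t => (a^2 - t^2) * (2 - a^2 - t^2) / (2*ε^2) with hgdef
  have hg_even : ∀ t, g (-t) = g t := by intro t; rw [hgdef]; dsimp only; ring
  have hg_pos : ∀ t, |t| < a → 0 < g t := by
    intro t ht
    rcases abs_lt.1 ht with ⟨h1, h2⟩
    have ht2 : t^2 < a^2 := by nlinarith
    have ha2 : a^2 < 1 := by nlinarith
    apply div_pos _ (by positivity)
    apply mul_pos (by nlinarith) (by nlinarith)
  have hga : g a = 0 := by rw [hgdef]; simp
  have hg_deriv : ∀ u : ℝ, HasDerivAt g ((2*u^3 - 2*u)/ε^2) u := by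
    intro u
    have hp : HasDerivAt (fun t : ℝ => t^2) (2*u) u := by
      simpa using hasDerivAt_pow 2 u
    have d1 : HasDerivAt (fun t : ℝ => a^2 - t^2) (-(2*u)) u := hp.const_sub (a^2)
    have d2 : HasDerivAt (fun t : ℝ => 2 - a^2 - t^2) (-(2*u)) u := hp.const_sub (2 - a^2)
    have := (d1.mul d2).div_const (2*ε^2)
    refine this.congr_deriv ?_; symm
    field_simp
    ring
  obtain ⟨V, hVC2, hVode, hV0, hVL, hVanti, hVzero, hVa⟩ :=
    glue ε a L hε ha0 hL g hg_even hg_pos hga hg_deriv v0 v0_cont v0_mem v0_zero v0_L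
      v0_inj v0_odd v0_Ioo v0_deriv
  have h2L : 2*L = 1/(m:ℝ) := by rw [hLeq, hT4def]; field_simp
  have h4L : 4*L = 2/(m:ℝ) := by rw [hLeq, hT4def]; field_simp; ring
  have hVshift : ∀ x, V (x - 2*L) = -V x := by
    intro x
    have := hVanti (x - 2*L)
    rw [sub_add_cancel] at this
    linarith
  refine ⟨V, hVC2, ?_, ?_, ?_, ?_, ?_⟩
  · intro x
    have := hVode x
    rw [hεdef] at this
    exact this
  · rintro ⟨c, hc⟩
    have h1 : V 0 = c := hc 0
    have h2 : V L = c := hc L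
    rw [hV0] at h1
    rw [hVL] at h2
    rw [← h1] at h2
    exact absurd h2.symm ha0.ne
  · intro x
    rw [← h4L]
    have h1 := hVanti x
    have h2 := hVanti (x + 2*L)
    rw [show x + 4*L = x + 2*L + 2*L by ring, h2, h1, neg_neg]
  · intro T hT0 hT1 hp
    have h1 := hp L
    rw [hVL] at h1
    obtain ⟨kk, hkk⟩ := (hVa (L + T)).1 h1
    have hTk : T = (2/(m:ℝ)) * (kk:ℝ) := by
      rw [← h4L]; linarith
    have h2m : (0:ℝ) < 2/(m:ℝ) := by positivity
    have hk0 : (0:ℝ) < (kk:ℝ) := by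
      by_contra hcon
      push_neg at hcon
      have : T ≤ 0 := by
        rw [hTk]
        exact mul_nonpos_of_nonneg_of_nonpos h2m.le hcon
      linarith
    have hk1 : (1:ℤ) ≤ kk := by
      have : (0:ℤ) < kk := by exact_mod_cast hk0
      omega
    have : 2/(m:ℝ) ≤ T := by
      rw [hTk]
      nth_rewrite 1 [← mul_one (2/(m:ℝ))]
      apply mul_le_mul_of_nonneg_left _ h2m.le
      exact_mod_cast hk1
    linarith
  · have hset : {x ∈ Set.Ico (0:ℝ) 1 | V x = V (x - 1/(m:ℝ))}
        = ↑((Finset.range m).image (fun j : ℕ => (j:ℝ)/(m:ℝ))) := by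
      ext x
      simp only [Finset.coe_image, Finset.coe_range, Set.mem_image, Set.mem_Iio,
        Set.mem_setOf_eq, Set.mem_sep_iff, Set.mem_Ico]
      constructor
      · rintro ⟨⟨hx0, hx1⟩, hveq⟩
        rw [← h2L, hVshift] at hveq
        have hv0 : V x = 0 := by linarith
        obtain ⟨kk, hkk⟩ := (hVzero x).1 hv0
        have hxk : x = (kk:ℝ)/(m:ℝ) := by
          rw [hkk, h2L]; ring
        have hkk0 : (0:ℤ) ≤ kk := by
          by_contra hcon
          push_neg at hcon
          have : (kk:ℝ) < 0 := by exact_mod_cast hcon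
          have : x < 0 := by
            rw [hxk]
            exact div_neg_of_neg_of_pos this hm'
          linarith
        have hkkm : kk < (m:ℤ) := by
          by_contra hcon
          push_neg at hcon
          have h5 : ((m:ℝ)) ≤ (kk:ℝ) := by exact_mod_cast hcon
          have : (1:ℝ) ≤ x := by
            rw [hxk]
            rw [le_div_iff₀ hm', one_mul]
            exact h5
          linarith
        refine ⟨kk.toNat, ?_, ?_⟩
        · omega
        · rw [hxk]
          congr 1
          exact_mod_cast Int.toNat_of_nonneg hkk0
      · rintro ⟨j, hj, rfl⟩
        have hx0 : (0:ℝ) ≤ (j:ℝ)/(m:ℝ) := by positivity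
        have hx1 : (j:ℝ)/(m:ℝ) < 1 := by
          rw [div_lt_one hm']
          exact_mod_cast hj
        have hv0 : V ((j:ℝ)/(m:ℝ)) = 0 := by
          apply (hVzero _).2
          exact ⟨(j:ℤ), by rw [h2L]; push_cast; ring⟩
        refine ⟨⟨hx0, hx1⟩, ?_⟩
        rw [← h2L, hVshift, hv0, neg_zero]
    have hminj : Function.Injective (fun j : ℕ => (j:ℝ)/(m:ℝ)) := by
      intro j1 j2 hj
      have h5 : (j1:ℝ) = (j2:ℝ) := by
        field_simp at hj
        exact_mod_cast hj
      exact_mod_cast h5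
    rw [hset, Set.ncard_coe_finset, Finset.card_image_of_injective _ hminj, Finset.card_range]
end
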